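/- arXiv:math/0609815 — 3 statements merged into one kernel-verified Lean document; each statement's English description precedes it below -/
import Mathlib

section
/- There is an absolute constant C such that for every integer n ≥ 1 and every choice of real coefficients α(R), one for each dyadic rectangle R ⊂ [0,1]^2 with |R| ≥ 2^{-n}, one has 2^{-n} · Σ_{|R| = 2^{-n}} |α(R)| ≤ C · ‖ Σ_{|R| ≥ 2^{-n}} α(R) h_R ‖_{L^∞([0,1]^2)}, where both sums range over dyadic rectangles R ⊂ [0,1]^2 of the indicated volume. -/
open MeasureTheory
open scoped ENNReal Classical

/-- The `L^∞`-normalized Haar function of the dyadic interval `[j/2^k, (j+1)/2^k)`: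
it is `-1` on the left half, `+1` on the right half, and `0` outside. -/
noncomputable def haar1 (k j : ℕ) (x : ℝ) : ℝ :=
  if (j : ℝ) / 2 ^ k ≤ x ∧ x < ((j : ℝ) + 1 / 2) / 2 ^ k then -1
  else if ((j : ℝ) + 1 / 2) / 2 ^ k ≤ x ∧ x < ((j : ℝ) + 1) / 2 ^ k then 1
  else 0

/-- A dyadic rectangle in `[0,1]^d` is encoded by its levels `R.1` and positions `R.2`;
its `i`-th side interval is `[R.2 i / 2 ^ R.1 i, (R.2 i + 1) / 2 ^ R.1 i)`.
`haarR R` is the associated (tensor product) Haar function. -/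
noncomputable def haarR {d : ℕ} (R : (Fin d → ℕ) × (Fin d → ℕ)) (x : Fin d → ℝ) : ℝ :=
  ∏ i, haar1 (R.1 i) (R.2 i) (x i)

/-- The dyadic rectangles in `[0,1]^d` of volume exactly `2 ^ (-n)`. -/
def rectsEq (d n : ℕ) : Finset ((Fin d → ℕ) × (Fin d → ℕ)) :=
  ((Fintype.piFinset fun _ => Finset.range (n + 1)) ×ˢ
      (Fintype.piFinset fun _ => Finset.range (2 ^ n))).filter
    fun R => (∑ i, R.1 i) = n ∧ ∀ i, R.2 i < 2 ^ R.1 i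

/-- The dyadic rectangles in `[0,1]^d` of volume at least `2 ^ (-n)`. -/
def rectsGe (d n : ℕ) : Finset ((Fin d → ℕ) × (Fin d → ℕ)) :=
  ((Fintype.piFinset fun _ => Finset.range (n + 1)) ×ˢ
      (Fintype.piFinset fun _ => Finset.range (2 ^ n))).filter
    fun R => (∑ i, R.1 i) ≤ n ∧ ∀ i, R.2 i < 2 ^ R.1 i

/-- The unit cube `[0,1]^d`. -/
def unitCube (d : ℕ) : Set (Fin d → ℝ) := Set.univ.pi fun _ => Set.Icc 0 1


/-!
Temlyakov's Riesz product. Let `f_k = ∑ sign (α R) h_R` over the rectangles `R` of size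
`2^{-k} × 2^{k-n}` and `Φ = ∏_{k=0}^{n} (1 + f_k)`. The summands of `f_k` have disjoint supports,
so `|f_k| ≤ 1` and `Φ ≥ 0`. A one-dimensional Haar function integrates to zero against any
function that is constant on its dyadic interval, so a product of Haar functions on `[0,1]^d`
integrates to zero as soon as, in some coordinate, one factor is strictly finer than all the
others. In dimension two, after expanding `Φ`, this kills every term of `∫ Φ` except the constant
one, and every term of `∫ h_R Φ` (`|R| ≥ 2^{-n}`) except `∫ h_R f_k` for `R` of size
`2^{-k} × 2^{k-n}`. Hence `∫ Φ = 1` and `∫ F Φ = 2^{-n} ∑_{|R| = 2^{-n}} |α R|` for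
`F = ∑_{|R| ≥ 2^{-n}} α R h_R`, while `∫ F Φ ≤ ‖F‖_∞ ∫ Φ = ‖F‖_∞`.
-/

open Set

lemma abs_prod_le_one {ι : Type*} {s : Finset ι} {f : ι → ℝ} (h : ∀ i ∈ s, |f i| ≤ 1) :
    |∏ i ∈ s, f i| ≤ 1 := by
  rw [Finset.abs_prod]
  exact Finset.prod_le_one (fun _ _ => abs_nonneg _) h

lemma abs_sign_le_one (a : ℝ) : |(SignType.sign a : ℝ)| ≤ 1 := by
  rcases lt_trichotomy a 0 with h | rfl | h
  · simp [h]
  · simp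
  · simp [h]

section Integration

variable {X : Type*} [MeasurableSpace X] {μ : Measure X}

lemma integrable_of_abs_le [IsFiniteMeasure μ] {f : X → ℝ} (hf : Measurable f) (C : ℝ)
    (hC : ∀ x, |f x| ≤ C) : Integrable f μ :=
  Integrable.of_bound hf.aestronglyMeasurable C
    (ae_of_all _ fun x => (Real.norm_eq_abs _).trans_le (hC x))

lemma integral_mul_prod_sum_eq_zero {ι κ : Type*} [Nonempty κ] {ψ : X → ℝ}
    {u : κ → X → ℝ} (c : κ → ℝ) (s : Finset ι) (t : ι → Finset κ)
    (hint : ∀ g : ι → κ, Integrable (fun x => ψ x * ∏ i ∈ s, u (g i) x) μ)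
    (hzero : ∀ g : ι → κ, (∀ i ∈ s, g i ∈ t i) →
      ∫ x, ψ x * ∏ i ∈ s, u (g i) x ∂μ = 0) :
    ∫ x, ψ x * ∏ i ∈ s, ∑ b ∈ t i, c b * u b x ∂μ = 0 := by
  classical
  let extend (p : (i : ι) → i ∈ s → κ) (i : ι) : κ :=
    if h : i ∈ s then p i h else Classical.arbitrary κ
  have hattach (p : (i : ι) → i ∈ s → κ) (f : κ → ℝ) :
      ∏ i ∈ s.attach, f (p i.1 i.2) = ∏ i ∈ s, f (extend p i) := by
    rw [← Finset.prod_attach s]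
    exact Finset.prod_congr rfl fun i _ => by simp only [extend, dif_pos i.2]
  have hexpand : ∀ x, ψ x * ∏ i ∈ s, ∑ b ∈ t i, c b * u b x = ∑ p ∈ s.pi t,
      (∏ i ∈ s, c (extend p i)) * (ψ x * ∏ i ∈ s, u (extend p i) x) := by
    intro x
    rw [Finset.prod_sum, Finset.mul_sum]
    refine Finset.sum_congr rfl fun p _ => ?_
    rw [Finset.prod_mul_distrib, hattach p c, hattach p fun b => u b x]
    ring
  simp_rw [hexpand]
  rw [integral_finsetSum _ fun p _ => (hint _).const_mul _]
  refine Finset.sum_eq_zero fun p hp => ?_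
  rw [integral_const_mul, hzero _ fun i hi => ?_, mul_zero]
  simp only [extend, dif_pos hi]
  exact Finset.mem_pi.1 hp i hi

lemma ofReal_integral_mul_le_eLpNorm_top_mul {f g : X → ℝ} (hg : Integrable g μ)
    (hg₀ : 0 ≤ g) :
    ENNReal.ofReal (∫ x, f x * g x ∂μ) ≤ eLpNorm f ⊤ μ * ENNReal.ofReal (∫ x, g x ∂μ) := by
  calc ENNReal.ofReal (∫ x, f x * g x ∂μ)
      ≤ ‖∫ x, f x * g x ∂μ‖ₑ := Real.ofReal_le_enorm (∫ x, f x * g x ∂μ)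
    _ ≤ ∫⁻ x, ‖f x‖ₑ * ‖g x‖ₑ ∂μ := by
      simpa only [enorm_mul] using enorm_integral_le_lintegral_enorm fun x => f x * g x
    _ ≤ ∫⁻ x, eLpNorm f ⊤ μ * ‖g x‖ₑ ∂μ := by
      refine lintegral_mono_ae ?_
      filter_upwards [ae_le_eLpNormEssSup (f := f) (μ := μ)] with x hx
      rw [eLpNorm_exponent_top]
      gcongr
    _ = eLpNorm f ⊤ μ * ∫⁻ x, ‖g x‖ₑ ∂μ := lintegral_const_mul'' _ hg.1.enorm
    _ = eLpNorm f ⊤ μ * ENNReal.ofReal (∫ x, g x ∂μ) := by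
      rw [ofReal_integral_eq_lintegral_ofReal hg (ae_of_all _ hg₀)]
      simp_rw [Real.enorm_eq_ofReal (hg₀ _)]

end Integration

noncomputable def dyadicIndex (k : ℕ) (x : ℝ) : ℤ := ⌊2 ^ k * x⌋

lemma dyadicIndex_eq_iff {k : ℕ} {x : ℝ} {i : ℤ} :
    dyadicIndex k x = i ↔ x ∈ Ico ((i : ℝ) / 2 ^ k) ((i + 1) / 2 ^ k) := by
  rw [dyadicIndex, Int.floor_eq_iff, mem_Ico, div_le_iff₀ (by positivity),
    lt_div_iff₀ (by positivity), mul_comm x]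

lemma dyadicIndex_succ (k : ℕ) (x : ℝ) : dyadicIndex k x = dyadicIndex (k + 1) x / 2 := by
  have h : (2 : ℝ) ^ k * x = 2 ^ (k + 1) * x / (2 : ℕ) := by push_cast; ring
  rw [dyadicIndex, dyadicIndex, h, Int.floor_div_natCast]
  rfl

lemma dyadicIndex_eq_of_le {k l : ℕ} (hkl : k ≤ l) {x y : ℝ}
    (h : dyadicIndex l x = dyadicIndex l y) : dyadicIndex k x = dyadicIndex k y := by
  induction l, hkl using Nat.le_induction with
  | base => exact h
  | succ l _ ih => exact ih (by rw [dyadicIndex_succ l x, dyadicIndex_succ l y, h])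

lemma haar1_eq_ite_dyadicIndex (k j : ℕ) (x : ℝ) :
    haar1 k j x = if dyadicIndex (k + 1) x = 2 * j then -1
      else if dyadicIndex (k + 1) x = 2 * j + 1 then 1 else 0 := by
  have h2 : (2 : ℝ) ^ (k + 1) = 2 * 2 ^ k := pow_succ' 2 k
  have e₀ : ((2 * j : ℤ) : ℝ) / 2 ^ (k + 1) = j / 2 ^ k := by
    rw [h2]; push_cast; field_simp
  have e₁ : ((2 * j : ℤ) + 1 : ℝ) / 2 ^ (k + 1) = (j + 1 / 2) / 2 ^ k := by
    rw [h2]; push_cast; field_simp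
  have e₁' : ((2 * j + 1 : ℤ) : ℝ) / 2 ^ (k + 1) = (j + 1 / 2) / 2 ^ k := by
    rw [h2]; push_cast; field_simp
  have e₂ : (((2 * j + 1 : ℤ) : ℝ) + 1) / 2 ^ (k + 1) = (j + 1) / 2 ^ k := by
    rw [h2]; push_cast; field_simp; ring
  simp only [haar1, dyadicIndex_eq_iff, mem_Ico, e₀, e₁, e₁', e₂]

lemma dyadicIndex_eq_of_haar1_ne_zero {k j : ℕ} {x : ℝ} (h : haar1 k j x ≠ 0) :
    dyadicIndex k x = j := by
  rw [haar1_eq_ite_dyadicIndex] at h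
  rw [dyadicIndex_succ k x]
  split_ifs at h <;> first | omega | exact (h rfl).elim

lemma haar1_mul_self (k j : ℕ) (x : ℝ) :
    haar1 k j x * haar1 k j x = if dyadicIndex k x = j then 1 else 0 := by
  rw [haar1_eq_ite_dyadicIndex, dyadicIndex_succ k x]
  split_ifs <;> first | (exfalso; omega) | norm_num

lemma haar1_mul_haar1_of_ne {k j j' : ℕ} (h : j ≠ j') (x : ℝ) :
    haar1 k j x * haar1 k j' x = 0 := by
  by_contra hne
  have := (dyadicIndex_eq_of_haar1_ne_zero (left_ne_zero_of_mul hne)).symm.trans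
    (dyadicIndex_eq_of_haar1_ne_zero (right_ne_zero_of_mul hne))
  exact h (by exact_mod_cast this)

lemma abs_haar1_le_one (k j : ℕ) (x : ℝ) : |haar1 k j x| ≤ 1 := by
  unfold haar1; split_ifs <;> norm_num

@[fun_prop]
lemma measurable_haar1 (k j : ℕ) : Measurable (haar1 k j) :=
  Measurable.ite measurableSet_Ico measurable_const
    (Measurable.ite measurableSet_Ico measurable_const measurable_const)

lemma ite_dyadicIndex_eq_indicator (k : ℕ) (i : ℤ) :
    (fun x => if dyadicIndex k x = i then (1 : ℝ) else 0) =
      (Ico ((i : ℝ) / 2 ^ k) ((i + 1) / 2 ^ k)).indicator 1 := by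
  ext x
  simp only [dyadicIndex_eq_iff, indicator_apply, Pi.one_apply]

lemma integrable_ite_dyadicIndex (k : ℕ) (i : ℤ) (μ : Measure ℝ) [IsFiniteMeasure μ] :
    Integrable (fun x => if dyadicIndex k x = i then (1 : ℝ) else 0) μ := by
  rw [ite_dyadicIndex_eq_indicator]
  exact (integrable_const 1).indicator measurableSet_Ico

lemma integral_ite_dyadicIndex {k i : ℕ} (hi : i < 2 ^ k) :
    ∫ x in Icc (0 : ℝ) 1, (if dyadicIndex k x = i then (1 : ℝ) else 0) = (2 ^ k)⁻¹ := by
  have hi' : (i : ℝ) + 1 ≤ 2 ^ k := by exact_mod_cast hi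
  have hsub : Ico ((i : ℝ) / 2 ^ k) ((i + 1) / 2 ^ k) ⊆ Icc 0 1 :=
    Ico_subset_Icc_self.trans (Icc_subset_Icc (by positivity)
      ((div_le_one (by positivity)).2 hi'))
  rw [ite_dyadicIndex_eq_indicator, integral_indicator_one measurableSet_Ico,
    measureReal_restrict_apply measurableSet_Ico]
  push_cast
  rw [inter_eq_left.2 hsub, Real.volume_real_Ico_of_le (by gcongr; linarith)]
  field_simp
  ring

lemma integral_haar1 {k j : ℕ} (hj : j < 2 ^ k) : ∫ x in Icc (0 : ℝ) 1, haar1 k j x = 0 := by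
  have hj' : 2 * j + 1 < 2 ^ (k + 1) := by rw [pow_succ]; omega
  have hsplit : ∀ x, haar1 k j x =
      (if dyadicIndex (k + 1) x = (2 * j + 1 : ℕ) then 1 else 0) -
        (if dyadicIndex (k + 1) x = (2 * j : ℕ) then 1 else 0) := by
    intro x
    rw [haar1_eq_ite_dyadicIndex]
    push_cast
    split_ifs <;> first | (exfalso; omega) | norm_num
  simp_rw [hsplit]
  rw [integral_sub (integrable_ite_dyadicIndex _ _ _) (integrable_ite_dyadicIndex _ _ _),
    integral_ite_dyadicIndex hj', integral_ite_dyadicIndex (by omega), sub_self]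

lemma integral_haar1_mul_haar1 {k j : ℕ} (hj : j < 2 ^ k) (j' : ℕ) :
    ∫ x in Icc (0 : ℝ) 1, haar1 k j x * haar1 k j' x = if j = j' then (2 ^ k)⁻¹ else 0 := by
  split_ifs with h
  · subst h
    simp_rw [haar1_mul_self]
    exact integral_ite_dyadicIndex hj
  · simp_rw [haar1_mul_haar1_of_ne h, integral_zero]

def IsDyadicStep (k : ℕ) (φ : ℝ → ℝ) : Prop :=
  ∀ x y, dyadicIndex k x = dyadicIndex k y → φ x = φ y

lemma IsDyadicStep.mono {k l : ℕ} {φ : ℝ → ℝ} (hφ : IsDyadicStep k φ) (hkl : k ≤ l) :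
    IsDyadicStep l φ :=
  fun x y hxy => hφ x y (dyadicIndex_eq_of_le hkl hxy)

lemma isDyadicStep_prod {ι : Type*} {k : ℕ} {s : Finset ι} {φ : ι → ℝ → ℝ}
    (hφ : ∀ i ∈ s, IsDyadicStep k (φ i)) : IsDyadicStep k fun x => ∏ i ∈ s, φ i x :=
  fun x y hxy => Finset.prod_congr rfl fun i hi => hφ i hi x y hxy

lemma isDyadicStep_haar1 (k j : ℕ) : IsDyadicStep (k + 1) (haar1 k j) := by
  intro x y hxy
  simp only [haar1_eq_ite_dyadicIndex, hxy]

lemma IsDyadicStep.integral_mul_haar1 {k j : ℕ} {φ : ℝ → ℝ} (hφ : IsDyadicStep k φ)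
    (hj : j < 2 ^ k) : ∫ x in Icc (0 : ℝ) 1, φ x * haar1 k j x = 0 := by
  have hleft : dyadicIndex k (j / 2 ^ k) = j := by
    rw [dyadicIndex, mul_div_cancel₀ _ (by positivity), Int.floor_natCast]
  have hconst : ∀ x, φ x * haar1 k j x = φ (j / 2 ^ k) * haar1 k j x := by
    intro x
    by_cases hx : haar1 k j x = 0
    · rw [hx, mul_zero, mul_zero]
    · rw [hφ x _ ((dyadicIndex_eq_of_haar1_ne_zero hx).trans hleft.symm)]
  simp_rw [hconst]
  rw [integral_const_mul, integral_haar1 hj, mul_zero]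

lemma integral_prod_haar1_eq_zero {ι : Type*} {s : Finset ι} {lv ps : ι → ℕ} {m : ι}
    (hm : m ∈ s) (hmax : ∀ i ∈ s, i ≠ m → lv i < lv m) (hps : ps m < 2 ^ lv m) :
    ∫ x in Icc (0 : ℝ) 1, ∏ i ∈ s, haar1 (lv i) (ps i) x = 0 := by
  simp_rw [← Finset.prod_erase_mul s _ hm]
  refine IsDyadicStep.integral_mul_haar1 (isDyadicStep_prod fun i hi => ?_) hps
  exact (isDyadicStep_haar1 _ _).mono
    (hmax i (Finset.mem_of_mem_erase hi) (Finset.ne_of_mem_erase hi))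

abbrev DyadicRect (d : ℕ) := (Fin d → ℕ) × (Fin d → ℕ)

lemma volume_restrict_unitCube (d : ℕ) :
    volume.restrict (unitCube d) = Measure.pi fun _ => volume.restrict (Icc (0 : ℝ) 1) := by
  rw [unitCube, volume_pi, Measure.restrict_pi_pi]

instance isProbabilityMeasure_restrict_unitCube (d : ℕ) :
    IsProbabilityMeasure (volume.restrict (unitCube d)) := by
  have : IsProbabilityMeasure (volume.restrict (Icc (0 : ℝ) 1)) := ⟨by simp⟩
  rw [volume_restrict_unitCube]
  infer_instance

section HaarRect

variable {d : ℕ}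

lemma abs_haarR_le_one (R : DyadicRect d) (x : Fin d → ℝ) : |haarR R x| ≤ 1 :=
  abs_prod_le_one fun _ _ => abs_haar1_le_one _ _ _

@[fun_prop]
lemma measurable_haarR (R : DyadicRect d) : Measurable (haarR R) := by
  unfold haarR; fun_prop

lemma integrable_haarR {μ : Measure (Fin d → ℝ)} [IsFiniteMeasure μ] (R : DyadicRect d) :
    Integrable (haarR R) μ :=
  integrable_of_abs_le (measurable_haarR R) 1 (abs_haarR_le_one R)

lemma integrable_prod_haarR {ι : Type*} {μ : Measure (Fin d → ℝ)} [IsFiniteMeasure μ]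
    {s : Finset ι} (r : ι → DyadicRect d) : Integrable (fun x => ∏ i ∈ s, haarR (r i) x) μ :=
  integrable_of_abs_le (by fun_prop) 1 fun x => abs_prod_le_one fun _ _ => abs_haarR_le_one _ x

lemma integrable_haarR_mul {μ : Measure (Fin d → ℝ)} (R : DyadicRect d)
    {f : (Fin d → ℝ) → ℝ} (hf : Integrable f μ) : Integrable (fun x => haarR R x * f x) μ :=
  hf.bdd_mul (measurable_haarR R).aestronglyMeasurable
    (ae_of_all _ fun x => (Real.norm_eq_abs _).trans_le (abs_haarR_le_one R x))

lemma eq_of_haarR_ne_zero {R R' : DyadicRect d} (hlv : R.1 = R'.1) {x : Fin d → ℝ}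
    (h : haarR R x ≠ 0) (h' : haarR R' x ≠ 0) : R = R' := by
  refine Prod.ext hlv (funext fun c => ?_)
  have hc := dyadicIndex_eq_of_haar1_ne_zero
    (Finset.prod_ne_zero_iff.1 h c (Finset.mem_univ c))
  have hc' := dyadicIndex_eq_of_haar1_ne_zero
    (Finset.prod_ne_zero_iff.1 h' c (Finset.mem_univ c))
  rw [← hlv] at hc'
  exact_mod_cast hc.symm.trans hc'

lemma abs_sum_mul_haarR_le_one {s : Finset (DyadicRect d)}
    (hs : ∀ R ∈ s, ∀ R' ∈ s, R.1 = R'.1) {a : DyadicRect d → ℝ} (ha : ∀ R, |a R| ≤ 1)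
    (x : Fin d → ℝ) : |∑ R ∈ s, a R * haarR R x| ≤ 1 := by
  by_cases h0 : ∑ R ∈ s, a R * haarR R x = 0
  · rw [h0, abs_zero]
    exact zero_le_one
  obtain ⟨R₀, hR₀, hx⟩ := Finset.exists_ne_zero_of_sum_ne_zero h0
  rw [Finset.sum_eq_single_of_mem R₀ hR₀ fun R hR hne => ?_]
  · rw [abs_mul]
    exact mul_le_one₀ (ha R₀) (abs_nonneg _) (abs_haarR_le_one _ _)
  · by_contra hRx
    exact hne (eq_of_haarR_ne_zero (hs R hR R₀ hR₀) (right_ne_zero_of_mul hRx)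
      (right_ne_zero_of_mul hx))

lemma integral_prod_haarR {ι : Type*} (s : Finset ι) (r : ι → DyadicRect d) :
    ∫ x in unitCube d, ∏ i ∈ s, haarR (r i) x =
      ∏ c, ∫ t in Icc (0 : ℝ) 1, ∏ i ∈ s, haar1 ((r i).1 c) ((r i).2 c) t := by
  have hswap : ∀ x : Fin d → ℝ, ∏ i ∈ s, haarR (r i) x =
      ∏ c, ∏ i ∈ s, haar1 ((r i).1 c) ((r i).2 c) (x c) := fun x => Finset.prod_comm
  simp_rw [hswap, volume_restrict_unitCube]
  exact integral_fintype_prod_eq_prod fun c t => ∏ i ∈ s, haar1 ((r i).1 c) ((r i).2 c) t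

lemma integral_prod_haarR_eq_zero {ι : Type*} {s : Finset ι} {r : ι → DyadicRect d}
    (c : Fin d) {m : ι} (hm : m ∈ s) (hmax : ∀ i ∈ s, i ≠ m → (r i).1 c < (r m).1 c)
    (hps : (r m).2 c < 2 ^ (r m).1 c) :
    ∫ x in unitCube d, ∏ i ∈ s, haarR (r i) x = 0 := by
  rw [integral_prod_haarR]
  exact Finset.prod_eq_zero (Finset.mem_univ c) (integral_prod_haar1_eq_zero hm hmax hps)

lemma integral_haarR_mul_prod_haarR {ι : Type*} (s : Finset ι) (g : ι → DyadicRect d)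
    (R : DyadicRect d) :
    ∫ x in unitCube d, haarR R x * ∏ i ∈ s, haarR (g i) x =
      ∫ x in unitCube d, ∏ o ∈ Finset.insertNone s, haarR (o.elim R g) x := by
  simp_rw [Finset.prod_insertNone]
  rfl

lemma integral_haarR_mul_prod_haarR_eq_zero_of_lt {ι : Type*} {s : Finset ι}
    {g : ι → DyadicRect d} {R : DyadicRect d} (c : Fin d) (hlt : ∀ i ∈ s, (g i).1 c < R.1 c)
    (hps : R.2 c < 2 ^ R.1 c) :
    ∫ x in unitCube d, haarR R x * ∏ i ∈ s, haarR (g i) x = 0 := by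
  rw [integral_haarR_mul_prod_haarR]
  refine integral_prod_haarR_eq_zero c Finset.none_mem_insertNone ?_ hps
  rintro (_ | i) hi hne
  · exact absurd rfl hne
  · exact hlt i (Finset.some_mem_insertNone.1 hi)

lemma integral_haarR_mul_prod_haarR_eq_zero_of_gt {ι : Type*} {s : Finset ι}
    {g : ι → DyadicRect d} {R : DyadicRect d} (c : Fin d) {m : ι} (hm : m ∈ s)
    (hRm : R.1 c < (g m).1 c) (hmax : ∀ i ∈ s, i ≠ m → (g i).1 c < (g m).1 c)
    (hps : (g m).2 c < 2 ^ (g m).1 c) :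
    ∫ x in unitCube d, haarR R x * ∏ i ∈ s, haarR (g i) x = 0 := by
  rw [integral_haarR_mul_prod_haarR]
  refine integral_prod_haarR_eq_zero (m := some m) c (Finset.some_mem_insertNone.2 hm) ?_ hps
  rintro (_ | i) hi hne
  · exact hRm
  · exact hmax i (Finset.some_mem_insertNone.1 hi) fun h => hne (h ▸ rfl)

lemma integral_haarR_mul_haarR {R R' : DyadicRect d} (hlv : R.1 = R'.1)
    (hps : ∀ c, R.2 c < 2 ^ R.1 c) :
    ∫ x in unitCube d, haarR R x * haarR R' x = if R = R' then (2 ^ ∑ c, R.1 c)⁻¹ else 0 := by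
  have hsplit : ∀ x : Fin d → ℝ, haarR R x * haarR R' x =
      ∏ c, haar1 (R.1 c) (R.2 c) (x c) * haar1 (R.1 c) (R'.2 c) (x c) := by
    intro x
    rw [haarR, haarR, ← Finset.prod_mul_distrib, hlv]
  have hext : R = R' ↔ ∀ c, R.2 c = R'.2 c := by
    simp only [Prod.ext_iff, hlv, funext_iff, true_and]
  simp_rw [hsplit, volume_restrict_unitCube]
  rw [integral_fintype_prod_eq_prod fun c t =>
    haar1 (R.1 c) (R.2 c) t * haar1 (R.1 c) (R'.2 c) t]
  simp_rw [integral_haar1_mul_haar1 (hps _)]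
  rw [Fintype.prod_ite_zero, Finset.prod_inv_distrib, Finset.prod_pow_eq_pow_sum]
  by_cases h : R = R'
  · rw [if_pos (hext.1 h), if_pos h]
  · rw [if_neg (mt hext.2 h), if_neg h]

end HaarRect

lemma mem_piFinset_of_sum_le {d n : ℕ} {R : DyadicRect d} (hsum : ∑ i, R.1 i ≤ n)
    (hps : ∀ i, R.2 i < 2 ^ R.1 i) :
    R ∈ (Fintype.piFinset fun _ => Finset.range (n + 1)) ×ˢ
      (Fintype.piFinset fun _ => Finset.range (2 ^ n)) := by
  have hle : ∀ i, R.1 i ≤ n := fun i =>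
    (Finset.single_le_sum (fun j _ => Nat.zero_le (R.1 j)) (Finset.mem_univ i)).trans hsum
  simp only [Finset.mem_product, Fintype.mem_piFinset, Finset.mem_range]
  exact ⟨fun i => Nat.lt_succ_of_le (hle i),
    fun i => (hps i).trans_le (Nat.pow_le_pow_right two_pos (hle i))⟩

lemma mem_rectsGe {d n : ℕ} {R : DyadicRect d} :
    R ∈ rectsGe d n ↔ ∑ i, R.1 i ≤ n ∧ ∀ i, R.2 i < 2 ^ R.1 i := by
  rw [rectsGe, Finset.mem_filter]
  exact ⟨And.right, fun h => ⟨mem_piFinset_of_sum_le h.1 h.2, h⟩⟩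

lemma mem_rectsEq {d n : ℕ} {R : DyadicRect d} :
    R ∈ rectsEq d n ↔ ∑ i, R.1 i = n ∧ ∀ i, R.2 i < 2 ^ R.1 i := by
  rw [rectsEq, Finset.mem_filter]
  exact ⟨And.right, fun h => ⟨mem_piFinset_of_sum_le h.1.le h.2, h⟩⟩

lemma rectsEq_subset_rectsGe (d n : ℕ) : rectsEq d n ⊆ rectsGe d n := fun _ hR =>
  mem_rectsGe.2 ⟨(mem_rectsEq.1 hR).1.le, (mem_rectsEq.1 hR).2⟩

section RieszProduct

def rectsOfShape (n k : ℕ) : Finset (DyadicRect 2) :=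
  (rectsEq 2 n).filter fun R => R.1 0 = k

lemma mem_rectsOfShape {n k : ℕ} {R : DyadicRect 2} :
    R ∈ rectsOfShape n k ↔ R.1 0 = k ∧ R.1 1 = n - k ∧ k ≤ n ∧ ∀ c, R.2 c < 2 ^ R.1 c := by
  rw [rectsOfShape, Finset.mem_filter, mem_rectsEq, Fin.sum_univ_two]
  constructor
  · rintro ⟨⟨hsum, hps⟩, rfl⟩
    exact ⟨rfl, by omega, by omega, hps⟩
  · rintro ⟨h0, h1, hk, hps⟩
    exact ⟨⟨by omega, hps⟩, h0⟩

lemma integral_haarR_mul_prod_haarR_eq_zero {n : ℕ} {R : DyadicRect 2}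
    (hR : R ∈ rectsGe 2 n) {s : Finset ℕ} {g : ℕ → DyadicRect 2}
    (hg : ∀ k ∈ s, g k ∈ rectsOfShape n k)
    (hs : ¬(s = {R.1 0} ∧ R ∈ rectsEq 2 n)) :
    ∫ x in unitCube 2, haarR R x * ∏ k ∈ s, haarR (g k) x = 0 := by
  -- Otherwise the finest level in one of the two coordinates is attained by a single factor.
  obtain ⟨hsum, hps⟩ := mem_rectsGe.1 hR
  rw [Fin.sum_univ_two] at hsum
  have hg' := fun k hk => mem_rectsOfShape.1 (hg k hk)
  rcases s.eq_empty_or_nonempty with rfl | hne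
  · exact integral_haarR_mul_prod_haarR_eq_zero_of_lt 0 (by simp) (hps 0)
  have hM := s.max'_mem hne
  have hm := s.min'_mem hne
  rcases lt_trichotomy (R.1 0) (s.max' hne) with hlt | heq | hgt
  · refine integral_haarR_mul_prod_haarR_eq_zero_of_gt 0 hM ?_ (fun k hk hkM => ?_)
      ((hg' _ hM).2.2.2 0)
    · rwa [(hg' _ hM).1]
    · rw [(hg' k hk).1, (hg' _ hM).1]
      exact lt_of_le_of_ne (s.le_max' k hk) hkM
  · by_cases hfine : R.1 1 < n - s.min' hne
    · refine integral_haarR_mul_prod_haarR_eq_zero_of_gt 1 hm ?_ (fun k hk hkm => ?_)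
        ((hg' _ hm).2.2.2 1)
      · rwa [(hg' _ hm).2.1]
      · have hmk := lt_of_le_of_ne (s.min'_le k hk) (Ne.symm hkm)
        rw [(hg' k hk).2.1, (hg' _ hm).2.1]
        have := (hg' k hk).2.2.1
        omega
    · have hmM := s.min'_le _ hM
      refine absurd ⟨Finset.eq_singleton_iff_unique_mem.2 ⟨heq ▸ hM, fun k hk => ?_⟩,
        mem_rectsEq.2 ⟨by rw [Fin.sum_univ_two]; omega, hps⟩⟩ hs
      have := s.min'_le k hk
      have := s.le_max' k hk
      omega
  · refine integral_haarR_mul_prod_haarR_eq_zero_of_lt 0 (fun k hk => ?_) (hps 0)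
    rw [(hg' k hk).1]
    exact (s.le_max' k hk).trans_lt hgt

variable (α : DyadicRect 2 → ℝ) (n : ℕ)

noncomputable def rieszFactor (k : ℕ) (x : Fin 2 → ℝ) : ℝ :=
  ∑ R ∈ rectsOfShape n k, (SignType.sign (α R) : ℝ) * haarR R x

noncomputable def rieszProduct (x : Fin 2 → ℝ) : ℝ :=
  ∏ k ∈ Finset.range (n + 1), (1 + rieszFactor α n k x)

@[fun_prop]
lemma measurable_rieszFactor (k : ℕ) : Measurable (rieszFactor α n k) := by
  unfold rieszFactor; fun_prop

lemma abs_rieszFactor_le_one (k : ℕ) (x : Fin 2 → ℝ) : |rieszFactor α n k x| ≤ 1 := by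
  refine abs_sum_mul_haarR_le_one (fun R hR R' hR' => ?_) (fun R => abs_sign_le_one (α R)) x
  obtain ⟨h0, h1, -⟩ := mem_rectsOfShape.1 hR
  obtain ⟨h0', h1', -⟩ := mem_rectsOfShape.1 hR'
  exact funext (Fin.forall_fin_two.2 ⟨h0.trans h0'.symm, h1.trans h1'.symm⟩)

lemma rieszProduct_nonneg : 0 ≤ rieszProduct α n := fun x =>
  Finset.prod_nonneg fun k _ =>
    neg_le_iff_add_nonneg'.1 (abs_le.1 (abs_rieszFactor_le_one α n k x)).1

lemma integrable_rieszProduct :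
    Integrable (rieszProduct α n) (volume.restrict (unitCube 2)) := by
  refine integrable_of_abs_le (by unfold rieszProduct; fun_prop) (2 ^ (n + 1)) fun x => ?_
  have hfac (k : ℕ) := abs_le.1 (abs_rieszFactor_le_one α n k x)
  calc |rieszProduct α n x| = ∏ k ∈ Finset.range (n + 1), (1 + rieszFactor α n k x) :=
        abs_of_nonneg (rieszProduct_nonneg α n x)
    _ ≤ ∏ k ∈ Finset.range (n + 1), (2 : ℝ) :=
        Finset.prod_le_prod (fun k _ => by linarith [hfac k]) fun k _ => by linarith [hfac k]
    _ = 2 ^ (n + 1) := by rw [Finset.prod_const, Finset.card_range]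

lemma integrable_prod_rieszFactor (s : Finset ℕ) :
    Integrable (fun x => ∏ k ∈ s, rieszFactor α n k x) (volume.restrict (unitCube 2)) :=
  integrable_of_abs_le (by fun_prop) 1 fun x =>
    abs_prod_le_one fun k _ => abs_rieszFactor_le_one α n k x

lemma integral_prod_rieszFactor {s : Finset ℕ} (hs : s.Nonempty) :
    ∫ x in unitCube 2, ∏ k ∈ s, rieszFactor α n k x = 0 := by
  have h := integral_mul_prod_sum_eq_zero (μ := volume.restrict (unitCube 2))
    (ψ := fun _ => 1) (u := haarR) (fun R => (SignType.sign (α R) : ℝ)) s (rectsOfShape n)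
    (fun g => by simpa only [one_mul] using integrable_prod_haarR g)
    (fun g hg => by
      simp only [one_mul]
      refine integral_prod_haarR_eq_zero (r := g) 0 (s.max'_mem hs) (fun k hk hne => ?_)
        ((mem_rectsOfShape.1 (hg _ (s.max'_mem hs))).2.2.2 0)
      rw [(mem_rectsOfShape.1 (hg k hk)).1, (mem_rectsOfShape.1 (hg _ (s.max'_mem hs))).1]
      exact lt_of_le_of_ne (s.le_max' k hk) hne)
  simp only [one_mul] at h
  exact h

lemma integral_rieszProduct : ∫ x in unitCube 2, rieszProduct α n x = 1 := by
  simp_rw [rieszProduct, Finset.prod_one_add]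
  rw [integral_finsetSum _ fun s _ => integrable_prod_rieszFactor α n s,
    Finset.sum_eq_single_of_mem ∅ (Finset.empty_mem_powerset _)
      fun s _ hs => integral_prod_rieszFactor α n (Finset.nonempty_iff_ne_empty.2 hs)]
  simp_rw [Finset.prod_empty]
  rw [integral_const, probReal_univ, one_smul]

lemma integral_haarR_mul_rieszFactor {R : DyadicRect 2} (hR : R ∈ rectsEq 2 n) :
    ∫ x in unitCube 2, haarR R x * rieszFactor α n (R.1 0) x =
      SignType.sign (α R) * ((2 : ℝ) ^ n)⁻¹ := by
  obtain ⟨hsum, hps⟩ := mem_rectsEq.1 hR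
  have hshape : R ∈ rectsOfShape n (R.1 0) := Finset.mem_filter.2 ⟨hR, rfl⟩
  have hlv : ∀ R' ∈ rectsOfShape n (R.1 0), R.1 = R'.1 := fun R' hR' => by
    obtain ⟨h0, h1, -⟩ := mem_rectsOfShape.1 hR'
    rw [Fin.sum_univ_two] at hsum
    exact funext (Fin.forall_fin_two.2 ⟨h0.symm, by omega⟩)
  simp_rw [rieszFactor, Finset.mul_sum, mul_left_comm (haarR R _)]
  rw [integral_finsetSum _ fun R' _ =>
    (integrable_haarR_mul R (integrable_haarR R')).const_mul _]
  simp_rw [integral_const_mul]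
  rw [Finset.sum_eq_single_of_mem R hshape fun R' hR' hne => ?_]
  · rw [integral_haarR_mul_haarR rfl hps, if_pos rfl, hsum]
  · rw [integral_haarR_mul_haarR (hlv R' hR') hps, if_neg hne.symm, mul_zero]

lemma integral_haarR_mul_prod_rieszFactor {R : DyadicRect 2} (hR : R ∈ rectsGe 2 n)
    (s : Finset ℕ) :
    ∫ x in unitCube 2, haarR R x * ∏ k ∈ s, rieszFactor α n k x =
      if s = {R.1 0} ∧ R ∈ rectsEq 2 n then SignType.sign (α R) * ((2 : ℝ) ^ n)⁻¹ else 0 := by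
  split_ifs with h
  · obtain ⟨rfl, hReq⟩ := h
    simp_rw [Finset.prod_singleton]
    exact integral_haarR_mul_rieszFactor α n hReq
  · exact integral_mul_prod_sum_eq_zero _ s (rectsOfShape n)
      (fun g => integrable_haarR_mul R (integrable_prod_haarR g))
      fun g hg => integral_haarR_mul_prod_haarR_eq_zero hR hg h

lemma integral_haarR_mul_rieszProduct {R : DyadicRect 2} (hR : R ∈ rectsGe 2 n) :
    ∫ x in unitCube 2, haarR R x * rieszProduct α n x =
      if R ∈ rectsEq 2 n then SignType.sign (α R) * ((2 : ℝ) ^ n)⁻¹ else 0 := by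
  have hmem : {R.1 0} ∈ (Finset.range (n + 1)).powerset := by
    have := (mem_rectsGe.1 hR).1
    rw [Fin.sum_univ_two] at this
    simp only [Finset.mem_powerset, Finset.singleton_subset_iff, Finset.mem_range]
    omega
  simp_rw [rieszProduct, Finset.prod_one_add, Finset.mul_sum]
  rw [integral_finsetSum _ fun s _ =>
    integrable_haarR_mul R (integrable_prod_rieszFactor α n s)]
  simp_rw [integral_haarR_mul_prod_rieszFactor α n hR, ite_and]
  rw [Finset.sum_ite_eq', if_pos hmem]

lemma integral_mul_rieszProduct :
    ∫ x in unitCube 2, (∑ R ∈ rectsGe 2 n, α R * haarR R x) * rieszProduct α n x =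
      ((2 : ℝ) ^ n)⁻¹ * ∑ R ∈ rectsEq 2 n, |α R| := by
  simp_rw [Finset.sum_mul, mul_assoc]
  rw [integral_finsetSum _ fun R _ =>
    (integrable_haarR_mul R (integrable_rieszProduct α n)).const_mul _]
  simp_rw [integral_const_mul]
  rw [Finset.sum_congr rfl fun R hR => by rw [integral_haarR_mul_rieszProduct α n hR]]
  simp_rw [mul_ite, mul_zero]
  rw [Finset.sum_ite_mem, Finset.inter_eq_right.2 (rectsEq_subset_rectsGe 2 n), Finset.mul_sum]
  refine Finset.sum_congr rfl fun R _ => ?_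
  rw [← mul_assoc, self_mul_sign, mul_comm]

end RieszProduct

/-- **Talagrand–Temlyakov small ball inequality in dimension 2.** -/
theorem small_ball_two_dim :
    ∃ C : ℝ, 0 < C ∧ ∀ n : ℕ, 1 ≤ n → ∀ α : ((Fin 2 → ℕ) × (Fin 2 → ℕ)) → ℝ,
      ENNReal.ofReal ((2 : ℝ) ^ (-(n : ℝ)) * ∑ R ∈ rectsEq 2 n, |α R|) ≤
        ENNReal.ofReal C *
          eLpNorm (fun x => ∑ R ∈ rectsGe 2 n, α R * haarR R x) ⊤
            (volume.restrict (unitCube 2)) := by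
  refine ⟨1, one_pos, fun n _ α => ?_⟩
  rw [Real.rpow_neg zero_le_two, Real.rpow_natCast, ← integral_mul_rieszProduct α n,
    ENNReal.ofReal_one, one_mul]
  calc _ ≤ _ * ENNReal.ofReal (∫ x in unitCube 2, rieszProduct α n x) :=
        ofReal_integral_mul_le_eLpNorm_top_mul (integrable_rieszProduct α n)
          (rieszProduct_nonneg α n)
    _ = _ := by rw [integral_rieszProduct, ENNReal.ofReal_one, mul_one]
end

section
/- Let d ≥ 1 and let R_1, …, R_k ⊂ [0,1]^d be dyadic rectangles such that for every pair 1 ≤ j < j' ≤ k and every coordinate 1 ≤ t ≤ d, the side intervals satisfy R_{j,t} ≠ R_{j',t}. Set S := ∩_{j=1}^k R_j. If S is empty, then ∏_{j=1}^k h_{R_j} is identically zero; if S is nonempty, then S is a dyadic rectangle and ∏_{j=1}^k h_{R_j} = ε h_S for some sign ε ∈ {±1}. -/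
open MeasureTheory
open scoped ENNReal Classical

/-- `R` encodes a genuine dyadic rectangle: each position is below `2 ^ level`. -/
def ValidR {d : ℕ} (R : (Fin d → ℕ) × (Fin d → ℕ)) : Prop :=
  ∀ i, R.2 i < 2 ^ R.1 i

/-- The dyadic rectangle (as a subset of `ℝ^d`) encoded by levels `R.1` and positions `R.2`. -/
def rectSet {d : ℕ} (R : (Fin d → ℕ) × (Fin d → ℕ)) : Set (Fin d → ℝ) :=
  {x | ∀ i, (R.2 i : ℝ) / 2 ^ R.1 i ≤ x i ∧ x i < ((R.2 i : ℝ) + 1) / 2 ^ R.1 i}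

/-!
A point `y` lies in the dyadic interval of level `k` and position `a` iff `⌊y 2^k⌋ = a`, and
`⌊y 2^k⌋ = ⌊y 2^l⌋ / 2^(l-k)` for `k ≤ l`. Hence dyadic intervals sharing a point are nested, and
`h_I`, which is read off `⌊y 2^(k+1)⌋`, is constant on every dyadic interval of strictly higher
level.
Fix a point of `S`. In each coordinate the side intervals all contain it and are pairwise distinct,
so one of maximal level is strictly smaller than all the others: the product of their Haar
functions is its Haar function times the constant sign of the others on it. Taking the smallest
side in every coordinate gives `S` as a dyadic rectangle, and the product over coordinates gives
`± h_S`.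
-/

open Finset Function

def dyadicInterval (k a : ℕ) : Set ℝ := Set.Ico ((a : ℝ) / 2 ^ k) (((a : ℝ) + 1) / 2 ^ k)

lemma mem_rectSet {d : ℕ} {R : (Fin d → ℕ) × (Fin d → ℕ)} {x : Fin d → ℝ} :
    x ∈ rectSet R ↔ ∀ i, x i ∈ dyadicInterval (R.1 i) (R.2 i) :=
  Iff.rfl

lemma mem_dyadicInterval_iff_floor {k a : ℕ} {y : ℝ} :
    y ∈ dyadicInterval k a ↔ ⌊y * 2 ^ k⌋ = a := by
  rw [dyadicInterval, Set.mem_Ico, Int.floor_eq_iff, div_le_iff₀ (by positivity),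
    lt_div_iff₀ (by positivity)]
  push_cast
  rfl

lemma floor_mul_two_pow_eq_floor_div {k l : ℕ} (hkl : k ≤ l) (y : ℝ) :
    ⌊y * 2 ^ k⌋ = ⌊y * 2 ^ l⌋ / 2 ^ (l - k) := by
  have h : y * 2 ^ k = y * 2 ^ l / ((2 ^ (l - k) : ℕ) : ℝ) := by
    rw [eq_div_iff (by positivity), ← Nat.add_sub_cancel' hkl]
    push_cast
    rw [Nat.add_sub_cancel_left, pow_add]
    ring
  rw [h, Int.floor_div_natCast]
  push_cast
  rfl

lemma floor_mul_two_pow_eq_of_mem {k l b : ℕ} (hkl : k ≤ l) {y z : ℝ}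
    (hy : y ∈ dyadicInterval l b) (hz : z ∈ dyadicInterval l b) :
    ⌊y * 2 ^ k⌋ = ⌊z * 2 ^ k⌋ := by
  rw [floor_mul_two_pow_eq_floor_div hkl, floor_mul_two_pow_eq_floor_div hkl,
    mem_dyadicInterval_iff_floor.1 hy, mem_dyadicInterval_iff_floor.1 hz]

lemma dyadicInterval_subset_of_le {k l a b : ℕ} (hkl : k ≤ l) {x : ℝ}
    (hxa : x ∈ dyadicInterval k a) (hxb : x ∈ dyadicInterval l b) :
    dyadicInterval l b ⊆ dyadicInterval k a := fun y hy => by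
  rw [mem_dyadicInterval_iff_floor] at hxa ⊢
  rw [floor_mul_two_pow_eq_of_mem hkl hy hxb, hxa]

lemma eq_of_mem_dyadicInterval {k a b : ℕ} {x : ℝ}
    (ha : x ∈ dyadicInterval k a) (hb : x ∈ dyadicInterval k b) : a = b := by
  rw [mem_dyadicInterval_iff_floor] at ha hb
  exact_mod_cast ha.symm.trans hb

lemma haar1_eq_ite (k a : ℕ) (y : ℝ) :
    haar1 k a y = if y ∈ dyadicInterval (k + 1) (2 * a) then -1
      else if y ∈ dyadicInterval (k + 1) (2 * a + 1) then 1 else 0 := by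
  have half : ∀ c : ℝ, c / 2 ^ (k + 1) = (c / 2) / 2 ^ k := fun c => by
    rw [pow_succ]; field_simp
  simp only [haar1, dyadicInterval, Set.mem_Ico, half]
  push_cast
  ring_nf

lemma haar1_eq_zero_of_notMem {k a : ℕ} {y : ℝ} (hy : y ∉ dyadicInterval k a) :
    haar1 k a y = 0 := by
  have hfloor : ⌊y * 2 ^ k⌋ = ⌊y * 2 ^ (k + 1)⌋ / 2 := by
    simpa using floor_mul_two_pow_eq_floor_div (k.le_add_right 1) y
  rw [mem_dyadicInterval_iff_floor] at hy
  simp only [haar1_eq_ite, mem_dyadicInterval_iff_floor]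
  split_ifs <;> first | rfl | (push_cast at *; omega)

lemma haar1_eq_one_or_neg_one_of_mem {k a : ℕ} {y : ℝ} (hy : y ∈ dyadicInterval k a) :
    haar1 k a y = 1 ∨ haar1 k a y = -1 := by
  have hfloor : ⌊y * 2 ^ k⌋ = ⌊y * 2 ^ (k + 1)⌋ / 2 := by
    simpa using floor_mul_two_pow_eq_floor_div (k.le_add_right 1) y
  rw [mem_dyadicInterval_iff_floor] at hy
  simp only [haar1_eq_ite, mem_dyadicInterval_iff_floor]
  split_ifs <;> norm_num
  push_cast at *
  omega

lemma haar1_eq_of_mem_of_lt {k l a b : ℕ} (hkl : k < l) {y z : ℝ}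
    (hy : y ∈ dyadicInterval l b) (hz : z ∈ dyadicInterval l b) :
    haar1 k a y = haar1 k a z := by
  simp only [haar1_eq_ite, mem_dyadicInterval_iff_floor, floor_mul_two_pow_eq_of_mem hkl hy hz]

lemma prod_eq_one_or_neg_one {ι M : Type*} [CommMonoid M] [HasDistribNeg M] (s : Finset ι)
    (f : ι → M) (hf : ∀ i ∈ s, f i = 1 ∨ f i = -1) :
    ∏ i ∈ s, f i = 1 ∨ ∏ i ∈ s, f i = -1 :=
  prod_induction f (fun x => x = 1 ∨ x = -1)
    (by rintro a b (rfl | rfl) (rfl | rfl) <;> simp) (Or.inl rfl) hf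

lemma prod_haar1_eq_sign_mul {ι : Type*} [Fintype ι] {L P : ι → ℕ}
    (hinj : Injective fun j => (L j, P j)) {x₀ : ℝ} (hx₀ : ∀ j, x₀ ∈ dyadicInterval (L j) (P j))
    {m : ι} (hm : ∀ j, L j ≤ L m) :
    ∃ ε : ℝ, (ε = 1 ∨ ε = -1) ∧
      ∀ y, ∏ j, haar1 (L j) (P j) y = ε * haar1 (L m) (P m) y := by
  have hlt : ∀ j ≠ m, L j < L m := fun j hj => (hm j).lt_of_ne fun hL =>
    hj (hinj (Prod.ext hL (eq_of_mem_dyadicInterval (hL ▸ hx₀ j) (hx₀ m))))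
  refine ⟨∏ j ∈ univ.erase m, haar1 (L j) (P j) x₀,
    prod_eq_one_or_neg_one _ _ fun j _ => haar1_eq_one_or_neg_one_of_mem (hx₀ j), fun y => ?_⟩
  by_cases hy : y ∈ dyadicInterval (L m) (P m)
  · rw [← mul_prod_erase _ _ (mem_univ m), mul_comm,
      prod_congr rfl fun j hj => haar1_eq_of_mem_of_lt (hlt j (ne_of_mem_erase hj)) hy (hx₀ m)]
  · rw [haar1_eq_zero_of_notMem hy, mul_zero]
    exact prod_eq_zero (mem_univ m) (haar1_eq_zero_of_notMem hy)

lemma haarR_eq_zero_of_notMem {d : ℕ} {R : (Fin d → ℕ) × (Fin d → ℕ)} {x : Fin d → ℝ}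
    (hx : x ∉ rectSet R) : haarR R x = 0 := by
  obtain ⟨i, hi⟩ := not_forall.1 (mt mem_rectSet.2 hx)
  exact prod_eq_zero (mem_univ i) (haar1_eq_zero_of_notMem hi)

theorem product_rule_strongly_distinct_general (d : ℕ) (k : ℕ) (hk : 1 ≤ k)
    (R : Fin k → (Fin d → ℕ) × (Fin d → ℕ)) (hR : ∀ j, ValidR (R j))
    (hdist : ∀ j j' : Fin k, j ≠ j' → ∀ t : Fin d,
      ((R j).1 t, (R j).2 t) ≠ ((R j').1 t, (R j').2 t)) :
    ((⋂ j, rectSet (R j)) = ∅ → ∀ x, (∏ j, haarR (R j) x) = 0) ∧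
    ((⋂ j, rectSet (R j)).Nonempty →
      ∃ S : (Fin d → ℕ) × (Fin d → ℕ), ValidR S ∧ rectSet S = ⋂ j, rectSet (R j) ∧
        ∃ ε : ℝ, (ε = 1 ∨ ε = -1) ∧ ∀ x, (∏ j, haarR (R j) x) = ε * haarR S x) := by
  refine ⟨fun hS x => ?_, fun ⟨x₀, hx₀⟩ => ?_⟩
  · obtain ⟨j, hj⟩ : ∃ j, x ∉ rectSet (R j) := by
      simpa using Set.eq_empty_iff_forall_notMem.1 hS x
    exact prod_eq_zero (mem_univ j) (haarR_eq_zero_of_notMem hj)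
  rw [Set.mem_iInter] at hx₀
  have : Nonempty (Fin k) := ⟨⟨0, hk⟩⟩
  choose m hm using fun t : Fin d => Finite.exists_max fun j => (R j).1 t
  have hinj (t : Fin d) : Injective fun j => ((R j).1 t, (R j).2 t) := fun j j' h =>
    by_contra fun hne => hdist j j' hne t h
  choose ε hε hprod using fun t => prod_haar1_eq_sign_mul (hinj t) (fun j => hx₀ j t) (hm t)
  refine ⟨(fun t => (R (m t)).1 t, fun t => (R (m t)).2 t), fun t => hR (m t) t, ?_,
    ∏ t, ε t, prod_eq_one_or_neg_one _ _ fun t _ => hε t, fun x => ?_⟩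
  · ext x
    simp only [Set.mem_iInter, mem_rectSet]
    exact ⟨fun hx j t => dyadicInterval_subset_of_le (hm t j) (hx₀ j t) (hx₀ (m t) t) (hx t),
      fun hx t => hx (m t) t⟩
  · simp only [haarR]
    rw [prod_comm, ← prod_mul_distrib]
    exact prod_congr rfl fun t _ => hprod t (x t)

/-- **Product rule in dimension `d` (Proposition 6.1).** If the rectangles `R 1, …, R k`
have pairwise distinct side intervals in every coordinate, then their Haar product is
identically zero when `S = ⋂ R j` is empty, and equals `± h_S` when `S` is nonempty. -/
theorem product_rule_strongly_distinct (d : ℕ) (hd : 1 ≤ d) (k : ℕ) (hk : 1 ≤ k)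
    (R : Fin k → (Fin d → ℕ) × (Fin d → ℕ)) (hR : ∀ j, ValidR (R j))
    (hdist : ∀ j j' : Fin k, j ≠ j' → ∀ t : Fin d,
      ((R j).1 t, (R j).2 t) ≠ ((R j').1 t, (R j').2 t)) :
    ((⋂ j, rectSet (R j)) = ∅ → ∀ x, (∏ j, haarR (R j) x) = 0) ∧
    ((⋂ j, rectSet (R j)).Nonempty →
      ∃ S : (Fin d → ℕ) × (Fin d → ℕ), ValidR S ∧ rectSet S = ⋂ j, rectSet (R j) ∧
        ∃ ε : ℝ, (ε = 1 ∨ ε = -1) ∧ ∀ x, (∏ j, haarR (R j) x) = ε * haarR S x) :=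
  product_rule_strongly_distinct_general d k hk R hR hdist
end

section
/- There exist absolute constants ε_0 ∈ (0,1) and C, c > 0 such that the following holds. Fix ε ∈ (0, ε_0] and a ∈ (0,1); set b := 1/6; let n be sufficiently large (depending on a and ε), set q := ⌈a n^ε⌉ and ρ̃ := a q^b / n; let I_1 < ⋯ < I_q be a partition of {0,1,…,n} into nonempty consecutive intervals of integers, each of cardinality at most 2(n+1)/q; set 𝔸_t := {r ∈ ℍ_n : r_1 ∈ I_t} and F_t := Σ_{r∈𝔸_t} f_r for any fixed choice of r-functions (f_r)_{r∈ℍ_n}; and let Ψ := ∏_{t=1}^{q} (1 + ρ̃ F_t). Then the Lebesgue measure of {x ∈ [0,1]^3 : Ψ(x) < 0} is at most C q exp(−c a^{−1} q^{1/3}). -/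
/-!
Every `r`-function with `r ∈ ℍ_n` is constant on the boxes of side `2^-(n+1)`, so the measure
of `{Ψ < 0}` is the proportion of bad points of the grid of such boxes, on which the binary
digits of the three coordinates are independent fair bits. `Ψ` can only be negative where some
factor is, i.e. where `|F_t| > ρ̃⁻¹`. Group `F_t = ∑_s σ_s G_s` by the first level `s`, where
`σ_s = ±1` is the Haar sign of the first coordinate at level `s`. Each slice `G_s` is a sum of
martingale differences `±1` indexed by the second level (flip the digit of the second
coordinate at that depth), so `|G_s| ≤ w` off a proportion `2 exp (-w² / 2(n+1))`; where all
slices are small, `F_t` is a martingale in `s` with increments at most `w` over at most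
`2(n+1)/q` levels. Both tails are Hoeffding's inequality, proved by pairing grid points through
the involutions flipping one digit. Taking `w² = (n+1) a⁻¹ q^(1/3)` makes both exponents at
least `a⁻¹ q^(1/3) / 16`, and the factor `n + 1` lost in the union bounds is absorbed once `n`
is large.
-/

open MeasureTheory
open scoped ENNReal Classical

/-- `ℍ_n`: triples `r = (r 0, r 1, r 2)` of natural numbers with `r 0 + r 1 + r 2 = n`. -/
def Hn (n : ℕ) : Finset (Fin 3 → ℕ) :=
  (Fintype.piFinset fun _ => Finset.range (n + 1)).filter fun r => ∑ i, r i = n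

/-- The `r`-function with parameter `r ∈ ℍ_n` built from the signs `ε`:
`f_r = ∑_{R ∈ 𝓡_r} ε_R h_R`, the sum over all dyadic rectangles with levels `r`. -/
noncomputable def rfun (ε : ((Fin 3 → ℕ) × (Fin 3 → ℕ)) → ℝ) (r : Fin 3 → ℕ)
    (x : Fin 3 → ℝ) : ℝ :=
  ∑ j ∈ Fintype.piFinset (fun i => Finset.range (2 ^ r i)), ε (r, j) * haarR (r, j) x

/-- `ℂ(2)`: pairs of distinct vectors in `ℍ_n` agreeing in the second coordinate. -/
def C2 (n : ℕ) : Finset ((Fin 3 → ℕ) × (Fin 3 → ℕ)) :=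
  ((Hn n) ×ˢ (Hn n)).filter fun rs => rs.1 ≠ rs.2 ∧ rs.1 1 = rs.2 1

/-- Given partition boundaries `m`, the set `𝔸_t ⊆ ℍ_n` of vectors whose first
coordinate lies in the `t`-th interval `I_t = [m (t-1), m t)` of the partition. -/
def Apart (n : ℕ) (m : ℕ → ℕ) (t : ℕ) : Finset (Fin 3 → ℕ) :=
  (Hn n).filter fun r => m (t - 1) ≤ r 0 ∧ r 0 < m t

namespace RieszProduct

open Finset Real Filter

section FlipMartingale

variable {α ι : Type*} [LinearOrder ι]

/-- `T s` are martingale differences for the uniform measure on `U`: the involution `φ s`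
of `U` negates `T s` and leaves every earlier `T s'` unchanged, and `|T s| ≤ w s`. -/
structure IsFlipMartingale (U : Finset α) (S : Finset ι) (φ : ι → α → α)
    (T : ι → α → ℝ) (w : ι → ℝ) : Prop where
  mapsTo : ∀ s ∈ S, ∀ u ∈ U, φ s u ∈ U
  involutive : ∀ s ∈ S, ∀ u, φ s (φ s u) = u
  flip_self : ∀ s ∈ S, ∀ u ∈ U, T s (φ s u) = -T s u
  flip_of_lt : ∀ s ∈ S, ∀ s' ∈ S, s' < s → ∀ u ∈ U, T s' (φ s u) = T s' u
  abs_le : ∀ s ∈ S, ∀ u ∈ U, |T s u| ≤ w s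

lemma card_filter_lt_mul_exp_le (U : Finset α) (F : α → ℝ) (lam : ℝ) {θ : ℝ} (hθ : 0 ≤ θ) :
    #{u ∈ U | lam < F u} * exp (θ * lam) ≤ ∑ u ∈ U, exp (θ * F u) :=
  calc #{u ∈ U | lam < F u} * exp (θ * lam)
      = ∑ u ∈ U with lam < F u, exp (θ * lam) := by rw [sum_const, nsmul_eq_mul]
    _ ≤ ∑ u ∈ U with lam < F u, exp (θ * F u) := sum_le_sum fun u hu =>
        exp_le_exp.2 (mul_le_mul_of_nonneg_left (mem_filter.1 hu).2.le hθ)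
    _ ≤ ∑ u ∈ U, exp (θ * F u) :=
        sum_le_sum_of_subset_of_nonneg (filter_subset _ _) fun _ _ _ => (exp_pos _).le

namespace IsFlipMartingale

variable {U : Finset α} {S : Finset ι} {φ : ι → α → α} {T : ι → α → ℝ} {w : ι → ℝ}

lemma mono (h : IsFlipMartingale U S φ T w) {S' : Finset ι} (hS : S' ⊆ S) :
    IsFlipMartingale U S' φ T w where
  mapsTo s hs := h.mapsTo s (hS hs)
  involutive s hs := h.involutive s (hS hs)
  flip_self s hs := h.flip_self s (hS hs)
  flip_of_lt s hs s' hs' := h.flip_of_lt s (hS hs) s' (hS hs')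
  abs_le s hs := h.abs_le s (hS hs)

lemma const_mul (h : IsFlipMartingale U S φ T w) {c : ℝ} (hc : 0 ≤ c) :
    IsFlipMartingale U S φ (fun s u => c * T s u) (fun s => c * w s) where
  mapsTo := h.mapsTo
  involutive := h.involutive
  flip_self s hs u hu := by rw [h.flip_self s hs u hu, mul_neg]
  flip_of_lt s hs s' hs' hlt u hu := by rw [h.flip_of_lt s hs s' hs' hlt u hu]
  abs_le s hs u hu := by
    rw [abs_mul, abs_of_nonneg hc]
    exact mul_le_mul_of_nonneg_left (h.abs_le s hs u hu) hc

lemma neg (h : IsFlipMartingale U S φ T w) : IsFlipMartingale U S φ (-T) w where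
  mapsTo := h.mapsTo
  involutive := h.involutive
  flip_self s hs u hu := by simp only [Pi.neg_apply, h.flip_self s hs u hu]
  flip_of_lt s hs s' hs' hlt u hu := by
    simp only [Pi.neg_apply, h.flip_of_lt s hs s' hs' hlt u hu]
  abs_le s hs u hu := by simpa only [Pi.neg_apply, abs_neg] using h.abs_le s hs u hu

lemma sum_comp_eq (h : IsFlipMartingale U S φ T w) {s : ι} (hs : s ∈ S) (g : α → ℝ) :
    ∑ u ∈ U, g (φ s u) = ∑ u ∈ U, g u :=
  sum_nbij' (φ s) (φ s) (h.mapsTo s hs) (h.mapsTo s hs)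
    (fun u _ => h.involutive s hs u) (fun u _ => h.involutive s hs u) fun _ _ => rfl

theorem sum_exp_sum_le [DecidableEq ι] (h : IsFlipMartingale U S φ T w) :
    ∑ u ∈ U, exp (∑ s ∈ S, T s u) ≤ #U * exp (∑ s ∈ S, w s ^ 2 / 2) := by
  induction S using Finset.induction_on_max with
  | empty => simp
  | insert a S hlt ih =>
    have ha : a ∉ S := fun haS => lt_irrefl a (hlt a haS)
    have haS : a ∈ insert a S := mem_insert_self a S
    set R : α → ℝ := fun u => ∑ s ∈ S, T s u
    have hR : ∀ u ∈ U, R (φ a u) = R u := fun u hu =>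
      sum_congr rfl fun s hs => h.flip_of_lt a haS s (mem_insert_of_mem hs) (hlt s hs) u hu
    -- averaging over the involution `φ a` turns `exp (T a)` into `cosh (T a)`
    have hcosh : ∑ u ∈ U, exp (∑ s ∈ insert a S, T s u) = ∑ u ∈ U, cosh (T a u) * exp (R u) := by
      have h2 := h.sum_comp_eq haS fun u => exp (T a u) * exp (R u)
      simp only [sum_insert ha, exp_add, cosh_eq]
      rw [← sum_congr rfl fun u hu => by rw [h.flip_self a haS u hu, hR u hu]] at h2
      rw [← add_halves (∑ u ∈ U, exp (T a u) * exp (R u))]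
      nth_rw 2 [← h2]
      rw [← add_div, ← sum_add_distrib, sum_div]
      exact sum_congr rfl fun u _ => by ring
    calc ∑ u ∈ U, exp (∑ s ∈ insert a S, T s u)
        ≤ ∑ u ∈ U, exp (w a ^ 2 / 2) * exp (R u) := by
          rw [hcosh]
          refine sum_le_sum fun u hu => mul_le_mul_of_nonneg_right ?_ (exp_pos _).le
          calc cosh (T a u) ≤ cosh (w a) := cosh_le_cosh.2 <|
                (h.abs_le a haS u hu).trans (le_abs_self _)
            _ ≤ exp (w a ^ 2 / 2) := cosh_le_exp_half_sq _
      _ = exp (w a ^ 2 / 2) * ∑ u ∈ U, exp (R u) := (mul_sum _ _ _).symm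
      _ ≤ exp (w a ^ 2 / 2) * (#U * exp (∑ s ∈ S, w s ^ 2 / 2)) :=
          mul_le_mul_of_nonneg_left (ih (h.mono (subset_insert a S))) (exp_pos _).le
      _ = #U * exp (∑ s ∈ insert a S, w s ^ 2 / 2) := by
          rw [sum_insert ha, exp_add]; ring

theorem card_lt_sum_le [DecidableEq ι] (h : IsFlipMartingale U S φ T w) {lam V : ℝ} (hlam : 0 ≤ lam)
    (hV : 0 < V) (hwV : ∑ s ∈ S, w s ^ 2 ≤ V) :
    #{u ∈ U | lam < ∑ s ∈ S, T s u} ≤ #U * exp (-(lam ^ 2 / (2 * V))) := by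
  set θ := lam / V
  have hθ : 0 ≤ θ := div_nonneg hlam hV.le
  have hmgf : ∑ u ∈ U, exp (θ * ∑ s ∈ S, T s u) ≤ #U * exp (θ ^ 2 * V / 2) :=
    calc ∑ u ∈ U, exp (θ * ∑ s ∈ S, T s u)
        = ∑ u ∈ U, exp (∑ s ∈ S, θ * T s u) := by simp only [mul_sum]
      _ ≤ #U * exp (∑ s ∈ S, (θ * w s) ^ 2 / 2) := (h.const_mul hθ).sum_exp_sum_le
      _ = #U * exp (θ ^ 2 * (∑ s ∈ S, w s ^ 2) / 2) := by
          simp only [mul_pow, mul_sum, sum_div]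
      _ ≤ #U * exp (θ ^ 2 * V / 2) := by gcongr
  have hexp : θ ^ 2 * V / 2 = θ * lam - lam ^ 2 / (2 * V) := by
    simp only [θ]; field_simp; ring
  refine le_of_mul_le_mul_right ?_ (exp_pos (θ * lam))
  calc #{u ∈ U | lam < ∑ s ∈ S, T s u} * exp (θ * lam)
      ≤ ∑ u ∈ U, exp (θ * ∑ s ∈ S, T s u) := card_filter_lt_mul_exp_le U _ lam hθ
    _ ≤ #U * exp (θ ^ 2 * V / 2) := hmgf
    _ = #U * exp (-(lam ^ 2 / (2 * V))) * exp (θ * lam) := by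
        rw [hexp, sub_eq_neg_add, exp_add]; ring

theorem card_lt_abs_sum_le [DecidableEq ι] (h : IsFlipMartingale U S φ T w) {lam V : ℝ}
    (hlam : 0 ≤ lam) (hV : 0 < V) (hwV : ∑ s ∈ S, w s ^ 2 ≤ V) :
    #{u ∈ U | lam < |∑ s ∈ S, T s u|} ≤ 2 * #U * exp (-(lam ^ 2 / (2 * V))) := by
  have hsplit : {u ∈ U | lam < |∑ s ∈ S, T s u|}
      = {u ∈ U | lam < ∑ s ∈ S, T s u} ∪ {u ∈ U | lam < ∑ s ∈ S, (-T) s u} := by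
    ext u
    simp only [mem_filter, mem_union, Pi.neg_apply, sum_neg_distrib, lt_abs, and_or_left]
  calc (#{u ∈ U | lam < |∑ s ∈ S, T s u|} : ℝ)
      ≤ #{u ∈ U | lam < ∑ s ∈ S, T s u} + #{u ∈ U | lam < ∑ s ∈ S, (-T) s u} := by
        rw [hsplit]; exact_mod_cast card_union_le _ _
    _ ≤ #U * exp (-(lam ^ 2 / (2 * V))) + #U * exp (-(lam ^ 2 / (2 * V))) :=
        add_le_add (h.card_lt_sum_le hlam hV hwV) (h.neg.card_lt_sum_le hlam hV hwV)
    _ = 2 * #U * exp (-(lam ^ 2 / (2 * V))) := by ring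

end IsFlipMartingale

end FlipMartingale

lemma mem_Hn {n : ℕ} {r : Fin 3 → ℕ} : r ∈ Hn n ↔ r 0 + r 1 + r 2 = n := by
  simp only [Hn, mem_filter, Fintype.mem_piFinset, mem_range, Fin.sum_univ_three,
    and_iff_right_iff_imp]
  intro h i
  fin_cases i <;> simp <;> omega

lemma le_of_mem_Hn {n : ℕ} {r : Fin 3 → ℕ} (hr : r ∈ Hn n) (i : Fin 3) : r i ≤ n := by
  have := mem_Hn.1 hr
  fin_cases i <;> simp <;> omega

lemma eq_of_mem_Hn {n : ℕ} {r r' : Fin 3 → ℕ} (hr : r ∈ Hn n) (hr' : r' ∈ Hn n)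
    (h0 : r 0 = r' 0) (h1 : r 1 = r' 1) : r = r' := by
  have := mem_Hn.1 hr
  have := mem_Hn.1 hr'
  funext i
  fin_cases i <;> simp <;> omega

lemma card_image_Apart_le {n q : ℕ} {m : ℕ → ℕ} {L : ℝ}
    (hblock : ∀ t < q, ((m (t + 1) - m t : ℕ) : ℝ) ≤ L) {t : ℕ} (ht : t ∈ Icc 1 q) :
    (#((Apart n m t).image (· 0)) : ℝ) ≤ L := by
  obtain ⟨s, rfl⟩ : ∃ s, t = s + 1 := ⟨t - 1, by have := (mem_Icc.1 ht).1; omega⟩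
  refine le_trans (Nat.cast_le.2 ?_) (hblock s (by have := (mem_Icc.1 ht).2; omega))
  refine (card_le_card fun k hk => ?_).trans (Nat.card_Ico _ _).le
  obtain ⟨r, hr, rfl⟩ := mem_image.1 hk
  exact mem_Ico.2 (mem_filter.1 hr).2

section Grid

/-- A grid point `u` stands for the box `∏ i, [u i / 2^(n+1), (u i + 1) / 2^(n+1))`; bit `n - k`
of `u i` tells in which half of its level-`k` dyadic interval the box lies. -/
def grid (n : ℕ) : Finset (Fin 3 → ℕ) := Fintype.piFinset fun _ => range (2 ^ (n + 1))

lemma mem_grid {n : ℕ} {u : Fin 3 → ℕ} : u ∈ grid n ↔ ∀ i, u i < 2 ^ (n + 1) := by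
  simp [grid]

lemma card_grid (n : ℕ) : #(grid n) = (2 ^ (n + 1)) ^ 3 := by
  simp [grid, Fintype.card_piFinset]

def flipBit (i : Fin 3) (b : ℕ) (u : Fin 3 → ℕ) : Fin 3 → ℕ :=
  Function.update u i (u i ^^^ 2 ^ b)

lemma flipBit_flipBit (i : Fin 3) (b : ℕ) (u : Fin 3 → ℕ) : flipBit i b (flipBit i b u) = u := by
  simp [flipBit]

lemma flipBit_mem_grid {n b : ℕ} (hb : b ≤ n) (i : Fin 3) {u : Fin 3 → ℕ} (hu : u ∈ grid n) :
    flipBit i b u ∈ grid n := by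
  rw [mem_grid] at hu ⊢
  intro i'
  rcases eq_or_ne i' i with rfl | h
  · simpa [flipBit] using
      Nat.xor_lt_two_pow (hu i') (Nat.pow_lt_pow_right one_lt_two (by omega))
  · simpa [flipBit, h] using hu i'

def gridSign (n : ℕ) (i : Fin 3) (k : ℕ) (u : Fin 3 → ℕ) : ℝ :=
  if (u i).testBit (n - k) then 1 else -1

def gridPos (n : ℕ) (r u : Fin 3 → ℕ) : Fin 3 → ℕ := fun i => u i / 2 ^ (n + 1 - r i)

lemma abs_gridSign (n : ℕ) (i : Fin 3) (k : ℕ) (u : Fin 3 → ℕ) : |gridSign n i k u| = 1 := by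
  unfold gridSign; split_ifs <;> simp

lemma gridSign_flipBit_self (n k : ℕ) (i : Fin 3) (u : Fin 3 → ℕ) :
    gridSign n i k (flipBit i (n - k) u) = -gridSign n i k u := by
  unfold gridSign flipBit
  cases h : (u i).testBit (n - k) <;> simp [Nat.testBit_xor, h]

lemma gridSign_flipBit_of_ne {n k : ℕ} {i i' : Fin 3} (h : i' ≠ i) (b : ℕ) (u : Fin 3 → ℕ) :
    gridSign n i' k (flipBit i b u) = gridSign n i' k u := by
  simp [gridSign, flipBit, h]

lemma gridSign_flipBit_of_ne_bit {n k b : ℕ} (h : b ≠ n - k) (i : Fin 3) (u : Fin 3 → ℕ) :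
    gridSign n i k (flipBit i b u) = gridSign n i k u := by
  simp [gridSign, flipBit, Nat.testBit_xor, Nat.testBit_two_pow_of_ne h]

lemma gridPos_flipBit {n b : ℕ} {r : Fin 3 → ℕ} {i : Fin 3} (h : b < n + 1 - r i)
    (u : Fin 3 → ℕ) : gridPos n r (flipBit i b u) = gridPos n r u := by
  funext i'
  rcases eq_or_ne i' i with rfl | hi
  · simp only [gridPos, flipBit, Function.update_self, ← Nat.shiftRight_eq_div_pow]
    apply Nat.eq_of_testBit_eq
    intro j
    simp [Nat.testBit_xor, Nat.testBit_two_pow_of_ne (by omega : b ≠ n + 1 - r i' + j)]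
  · simp [gridPos, flipBit, hi]

end Grid

section GridRfun

variable (n : ℕ) (ε : ((Fin 3 → ℕ) × (Fin 3 → ℕ)) → ℝ)

def gridRfunYZ (r u : Fin 3 → ℕ) : ℝ :=
  ε (r, gridPos n r u) * (gridSign n 1 (r 1) u * gridSign n 2 (r 2) u)

def gridRfun (r u : Fin 3 → ℕ) : ℝ := gridSign n 0 (r 0) u * gridRfunYZ n ε r u

variable {n ε}

lemma abs_gridRfunYZ (hε : ∀ R, ε R = 1 ∨ ε R = -1) (r u : Fin 3 → ℕ) :
    |gridRfunYZ n ε r u| = 1 := by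
  rw [gridRfunYZ, abs_mul, abs_mul, abs_gridSign, abs_gridSign]
  rcases hε (r, gridPos n r u) with h | h <;> simp [h]

lemma gridRfunYZ_flipBit_zero {b : ℕ} {r : Fin 3 → ℕ} (h : b < n + 1 - r 0) (u : Fin 3 → ℕ) :
    gridRfunYZ n ε r (flipBit 0 b u) = gridRfunYZ n ε r u := by
  rw [gridRfunYZ, gridRfunYZ, gridPos_flipBit h, gridSign_flipBit_of_ne (by decide),
    gridSign_flipBit_of_ne (by decide)]

lemma gridRfunYZ_flipBit_one_self {r : Fin 3 → ℕ} (h : r 1 ≤ n) (u : Fin 3 → ℕ) :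
    gridRfunYZ n ε r (flipBit 1 (n - r 1) u) = -gridRfunYZ n ε r u := by
  rw [gridRfunYZ, gridRfunYZ, gridPos_flipBit (by omega), gridSign_flipBit_self,
    gridSign_flipBit_of_ne (by decide)]
  ring

lemma gridRfunYZ_flipBit_one {b : ℕ} {r : Fin 3 → ℕ} (hb : b < n + 1 - r 1) (hne : b ≠ n - r 1)
    (u : Fin 3 → ℕ) : gridRfunYZ n ε r (flipBit 1 b u) = gridRfunYZ n ε r u := by
  rw [gridRfunYZ, gridRfunYZ, gridPos_flipBit hb, gridSign_flipBit_of_ne_bit hne,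
    gridSign_flipBit_of_ne (by decide)]

variable (n ε) in
def slice (A : Finset (Fin 3 → ℕ)) (s : ℕ) (u : Fin 3 → ℕ) : ℝ :=
  ∑ r ∈ A with r 0 = s, gridRfunYZ n ε r u

lemma sum_gridRfun_eq_sum_slice (A : Finset (Fin 3 → ℕ)) (u : Fin 3 → ℕ) :
    ∑ r ∈ A, gridRfun n ε r u = ∑ s ∈ A.image (· 0), gridSign n 0 s u * slice n ε A s u := by
  rw [← sum_fiberwise_of_maps_to (t := A.image (· 0)) fun r hr => mem_image_of_mem (· 0) hr]
  refine sum_congr rfl fun s _ => ?_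
  rw [slice, mul_sum]
  exact sum_congr rfl fun r hr => by rw [gridRfun, (mem_filter.1 hr).2]

variable (n ε) in
noncomputable def truncSlice (A : Finset (Fin 3 → ℕ)) (w : ℝ) (s : ℕ) (u : Fin 3 → ℕ) : ℝ :=
  if |slice n ε A s u| ≤ w then slice n ε A s u else 0

lemma sum_gridRfun_eq_sum_truncSlice {A : Finset (Fin 3 → ℕ)} {w : ℝ} {u : Fin 3 → ℕ}
    (h : ∀ s ∈ A.image (· 0), |slice n ε A s u| ≤ w) :
    ∑ r ∈ A, gridRfun n ε r u = ∑ s ∈ A.image (· 0), gridSign n 0 s u * truncSlice n ε A w s u := by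
  rw [sum_gridRfun_eq_sum_slice]
  exact sum_congr rfl fun s hs => by rw [truncSlice, if_pos (h s hs)]

lemma slice_flipBit_zero {A : Finset (Fin 3 → ℕ)} {s b : ℕ} (hb : b < n + 1 - s)
    (u : Fin 3 → ℕ) : slice n ε A s (flipBit 0 b u) = slice n ε A s u :=
  sum_congr rfl fun r hr => gridRfunYZ_flipBit_zero (by rw [(mem_filter.1 hr).2]; exact hb) u

end GridRfun

section Tails

variable {n : ℕ} {ε : ((Fin 3 → ℕ) × (Fin 3 → ℕ)) → ℝ}

/-- Within a slice, the summands live on distinct levels `r 1` and flipping bit `n - r 1` of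
the second coordinate negates exactly one of them: a martingale with increments `±1`. -/
theorem card_lt_abs_sum_gridRfunYZ_le (hε : ∀ R, ε R = 1 ∨ ε R = -1) {B : Finset (Fin 3 → ℕ)}
    (hB : B ⊆ Hn n) (hinj : Set.InjOn (fun r : Fin 3 → ℕ => r 1) B) {w : ℝ} (hw : 0 ≤ w) :
    #{u ∈ grid n | w < |∑ r ∈ B, gridRfunYZ n ε r u|}
      ≤ 2 * #(grid n) * exp (-(w ^ 2 / (2 * (n + 1)))) := by
  set T : ℕ → (Fin 3 → ℕ) → ℝ := fun v u => ∑ r ∈ B with r 1 = v, gridRfunYZ n ε r u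
  have hle : ∀ r ∈ B, r 1 ≤ n := fun r hr => le_of_mem_Hn (hB hr) 1
  have hmart : IsFlipMartingale (grid n) (range (n + 1)) (fun v => flipBit 1 (n - v)) T 1 :=
  { mapsTo := fun v _ u hu => flipBit_mem_grid (Nat.sub_le n v) 1 hu
    involutive := fun v _ => flipBit_flipBit 1 (n - v)
    flip_self := fun v _ u _ => by
      simp only [T, ← sum_neg_distrib]
      refine sum_congr rfl fun r hr => ?_
      obtain ⟨hrB, rfl⟩ := mem_filter.1 hr
      exact gridRfunYZ_flipBit_one_self (hle r hrB) u
    flip_of_lt := fun v hv v' _ hlt u _ => by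
      have := mem_range.1 hv
      refine sum_congr rfl fun r hr => ?_
      obtain ⟨-, rfl⟩ := mem_filter.1 hr
      exact gridRfunYZ_flipBit_one (by omega) (by omega) u
    abs_le := fun v _ u _ => by
      have hcard : #{r ∈ B | r 1 = v} ≤ 1 := card_le_one.2 fun r hr r' hr' => by
        rw [mem_filter] at hr hr'
        exact hinj hr.1 hr'.1 (hr.2.trans hr'.2.symm)
      calc |T v u| ≤ ∑ r ∈ B with r 1 = v, |gridRfunYZ n ε r u| := abs_sum_le_sum_abs _ _
        _ = #{r ∈ B | r 1 = v} := by simp [abs_gridRfunYZ hε]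
        _ ≤ 1 := by exact_mod_cast hcard }
  have hsum : ∀ u, ∑ v ∈ range (n + 1), T v u = ∑ r ∈ B, gridRfunYZ n ε r u := fun u =>
    sum_fiberwise_of_maps_to (fun r hr => mem_range.2 (Nat.lt_succ_of_le (hle r hr))) _
  simpa only [hsum] using hmart.card_lt_abs_sum_le hw (by positivity) (by simp)

/-- Across slices, flipping bit `n - s` of the first coordinate negates the sign of slice `s`
and leaves the slices themselves unchanged; the truncation keeps the increments bounded. -/
theorem card_lt_abs_sum_truncated_slice_le {A : Finset (Fin 3 → ℕ)} (hA : A ⊆ Hn n)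
    {w lam V : ℝ} (hw : 0 ≤ w) (hlam : 0 ≤ lam) (hV : 0 < V)
    (hwV : #(A.image (· 0)) * w ^ 2 ≤ V) :
    #{u ∈ grid n | lam < |∑ s ∈ A.image (· 0),
        gridSign n 0 s u * truncSlice n ε A w s u|}
      ≤ 2 * #(grid n) * exp (-(lam ^ 2 / (2 * V))) := by
  have hle : ∀ s ∈ A.image (· 0), s ≤ n := by
    simp only [mem_image]
    rintro s ⟨r, hr, rfl⟩
    exact le_of_mem_Hn (hA hr) 0
  have hmart : IsFlipMartingale (grid n) (A.image (· 0)) (fun s => flipBit 0 (n - s))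
      (fun s u => gridSign n 0 s u * truncSlice n ε A w s u)
      (fun _ => w) :=
  { mapsTo := fun s _ u hu => flipBit_mem_grid (Nat.sub_le n s) 0 hu
    involutive := fun s _ => flipBit_flipBit 0 (n - s)
    flip_self := fun s hs u _ => by
      have := hle s hs
      rw [gridSign_flipBit_self, truncSlice, truncSlice, slice_flipBit_zero (by omega), neg_mul]
    flip_of_lt := fun s hs s' _ hlt u _ => by
      have := hle s hs
      rw [gridSign_flipBit_of_ne_bit (by omega), truncSlice, truncSlice,
        slice_flipBit_zero (by omega)]
    abs_le := fun s _ u _ => by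
      rw [abs_mul, abs_gridSign, one_mul, truncSlice]
      split_ifs with h
      · exact h
      · rwa [abs_zero] }
  exact hmart.card_lt_abs_sum_le hlam hV (by simpa using hwV)

theorem card_lt_abs_sum_gridRfun_le (hε : ∀ R, ε R = 1 ∨ ε R = -1) {A : Finset (Fin 3 → ℕ)}
    (hA : A ⊆ Hn n) {w lam V : ℝ} (hw : 0 ≤ w) (hlam : 0 ≤ lam) (hV : 0 < V)
    (hwV : #(A.image (· 0)) * w ^ 2 ≤ V) :
    #{u ∈ grid n | lam < |∑ r ∈ A, gridRfun n ε r u|}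
      ≤ 2 * #(grid n) *
        ((n + 1) * exp (-(w ^ 2 / (2 * (n + 1)))) + exp (-(lam ^ 2 / (2 * V)))) := by
  set I := A.image (· 0)
  set bigSlice : ℕ → Finset (Fin 3 → ℕ) := fun s => {u ∈ grid n | w < |slice n ε A s u|}
  set E := 2 * #(grid n) * exp (-(w ^ 2 / (2 * (n + 1))))
  have hcover : {u ∈ grid n | lam < |∑ r ∈ A, gridRfun n ε r u|}
      ⊆ I.biUnion bigSlice ∪ {u ∈ grid n | lam < |∑ s ∈ I,
          gridSign n 0 s u * truncSlice n ε A w s u|} := by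
    intro u hu
    rw [mem_filter] at hu
    by_cases hbig : ∃ s ∈ I, w < |slice n ε A s u|
    · obtain ⟨s, hs, hbig⟩ := hbig
      exact mem_union_left _ (mem_biUnion.2 ⟨s, hs, mem_filter.2 ⟨hu.1, hbig⟩⟩)
    · simp only [not_exists, not_and, not_lt] at hbig
      exact mem_union_right _ (mem_filter.2 ⟨hu.1, sum_gridRfun_eq_sum_truncSlice hbig ▸ hu.2⟩)
  have hslice : ∀ s ∈ I, (#(bigSlice s) : ℝ) ≤ E := fun s _ =>
    card_lt_abs_sum_gridRfunYZ_le hε ((filter_subset _ A).trans hA)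
      (fun r hr r' hr' h1 => eq_of_mem_Hn (hA (mem_filter.1 hr).1) (hA (mem_filter.1 hr').1)
        ((mem_filter.1 hr).2.trans (mem_filter.1 hr').2.symm) h1) hw
  have hI : (#I : ℝ) ≤ n + 1 := by
    have : I ⊆ range (n + 1) := fun s hs => by
      obtain ⟨r, hr, rfl⟩ := mem_image.1 hs
      exact mem_range.2 (Nat.lt_succ_of_le (le_of_mem_Hn (hA hr) 0))
    exact_mod_cast (card_le_card this).trans (card_range _).le
  calc (#{u ∈ grid n | lam < |∑ r ∈ A, gridRfun n ε r u|} : ℝ)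
      ≤ ∑ s ∈ I, (#(bigSlice s) : ℝ) + #{u ∈ grid n | lam < |∑ s ∈ I,
          gridSign n 0 s u * truncSlice n ε A w s u|} := by
        exact_mod_cast (card_le_card hcover).trans
          ((card_union_le _ _).trans (Nat.add_le_add_right card_biUnion_le _))
    _ ≤ #I * E + 2 * #(grid n) * exp (-(lam ^ 2 / (2 * V))) := by
        gcongr
        · simpa using sum_le_sum hslice
        · exact card_lt_abs_sum_truncated_slice_le hA hw hlam hV hwV
    _ ≤ (n + 1) * E + 2 * #(grid n) * exp (-(lam ^ 2 / (2 * V))) := by gcongr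
    _ = _ := by ring

end Tails

theorem card_prod_neg_le {n : ℕ} {ε : ((Fin 3 → ℕ) × (Fin 3 → ℕ)) → ℝ}
    (hε : ∀ R, ε R = 1 ∨ ε R = -1) {ι : Type*} (T : Finset ι) {A : ι → Finset (Fin 3 → ℕ)}
    (hA : ∀ t ∈ T, A t ⊆ Hn n) {ρ w V : ℝ} (hρ : 0 < ρ) (hw : 0 ≤ w) (hV : 0 < V)
    (hwV : ∀ t ∈ T, #((A t).image (· 0)) * w ^ 2 ≤ V) :
    #{u ∈ grid n | ∏ t ∈ T, (1 + ρ * ∑ r ∈ A t, gridRfun n ε r u) < 0}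
      ≤ #T * (2 * #(grid n) *
        ((n + 1) * exp (-(w ^ 2 / (2 * (n + 1)))) + exp (-(ρ⁻¹ ^ 2 / (2 * V))))) := by
  -- a negative product has a negative factor, and `1 + ρ F < 0` forces `|F| > ρ⁻¹`
  have hcover : {u ∈ grid n | ∏ t ∈ T, (1 + ρ * ∑ r ∈ A t, gridRfun n ε r u) < 0}
      ⊆ T.biUnion fun t => {u ∈ grid n | ρ⁻¹ < |∑ r ∈ A t, gridRfun n ε r u|} := by
    intro u hu
    rw [mem_filter] at hu
    obtain ⟨t, ht, hneg⟩ : ∃ t ∈ T, 1 + ρ * ∑ r ∈ A t, gridRfun n ε r u < 0 := by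
      by_contra! h
      exact hu.2.not_ge (prod_nonneg h)
    refine mem_biUnion.2 ⟨t, ht, mem_filter.2 ⟨hu.1, lt_abs.2 (Or.inr ?_)⟩⟩
    rw [inv_eq_one_div, div_lt_iff₀ hρ]
    linarith
  calc (#{u ∈ grid n | ∏ t ∈ T, (1 + ρ * ∑ r ∈ A t, gridRfun n ε r u) < 0} : ℝ)
      ≤ ∑ t ∈ T, (#{u ∈ grid n | ρ⁻¹ < |∑ r ∈ A t, gridRfun n ε r u|} : ℝ) := by
        exact_mod_cast (card_le_card hcover).trans card_biUnion_le
    _ ≤ _ := by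
        rw [← nsmul_eq_mul, ← sum_const]
        exact sum_le_sum fun t ht => card_lt_abs_sum_gridRfun_le hε (hA t ht) hw
          (inv_pos.2 hρ).le hV (hwV t ht)

section Haar

lemma haar1_eq_of_nonneg (k j : ℕ) {x : ℝ} (hx : 0 ≤ x) :
    haar1 k j x = if ⌊x * 2 ^ (k + 1)⌋₊ = 2 * j then -1
      else if ⌊x * 2 ^ (k + 1)⌋₊ = 2 * j + 1 then 1 else 0 := by
  have hk : (0 : ℝ) < 2 ^ k := by positivity
  have hle : ∀ c : ℝ, c / 2 ^ k ≤ x ↔ 2 * c ≤ x * 2 ^ (k + 1) := fun c => by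
    rw [div_le_iff₀ hk, pow_succ]; constructor <;> intro h <;> linarith
  have hlt : ∀ c : ℝ, x < c / 2 ^ k ↔ x * 2 ^ (k + 1) < 2 * c := fun c => by
    rw [lt_div_iff₀ hk, pow_succ]; constructor <;> intro h <;> linarith
  have hfloor : ∀ N : ℕ, ⌊x * 2 ^ (k + 1)⌋₊ = N ↔ (N : ℝ) ≤ x * 2 ^ (k + 1) ∧
      x * 2 ^ (k + 1) < N + 1 := fun N => Nat.floor_eq_iff (by positivity)
  simp only [haar1, hle, hlt, hfloor]
  push_cast
  ring_nf

lemma haar1_one {k j : ℕ} (hj : j < 2 ^ k) : haar1 k j 1 = 0 := by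
  have h : ⌊(1 : ℝ) * 2 ^ (k + 1)⌋₊ = 2 * 2 ^ k := by
    rw [one_mul, ← Nat.cast_ofNat, ← Nat.cast_pow, Nat.floor_natCast, pow_succ, mul_comm]
  rw [haar1_eq_of_nonneg k j zero_le_one, h, if_neg (by omega), if_neg (by omega)]

lemma haar1_eq_ite_testBit {n k : ℕ} (hk : k ≤ n) (j : ℕ) {x : ℝ} (hx : 0 ≤ x) :
    haar1 k j x = if ⌊x * 2 ^ (n + 1)⌋₊ / 2 ^ (n + 1 - k) = j then
      (if (⌊x * 2 ^ (n + 1)⌋₊).testBit (n - k) then 1 else -1) else 0 := by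
  set u := ⌊x * 2 ^ (n + 1)⌋₊
  have hv : ⌊x * 2 ^ (k + 1)⌋₊ = u / 2 ^ (n - k) := by
    have hsplit : (2 : ℝ) ^ (n + 1) = 2 ^ (k + 1) * 2 ^ (n - k) := by
      rw [← pow_add]; congr 1; omega
    rw [← Nat.floor_div_natCast, Nat.cast_pow, Nat.cast_ofNat, hsplit, ← mul_assoc,
      mul_div_cancel_right₀ _ (by positivity)]
  have hdiv : u / 2 ^ (n + 1 - k) = u / 2 ^ (n - k) / 2 := by
    rw [Nat.div_div_eq_div_mul, ← pow_succ]
    congr 2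
    omega
  rw [haar1_eq_of_nonneg k j hx, hv, hdiv, Nat.testBit_eq_decide_div_mod_eq]
  split_ifs <;> simp_all <;> omega

end Haar

noncomputable def gridIndex (n : ℕ) (x : Fin 3 → ℝ) : Fin 3 → ℕ := fun i => ⌊x i * 2 ^ (n + 1)⌋₊

def gridBox (n : ℕ) (u : Fin 3 → ℕ) : Set (Fin 3 → ℝ) :=
  Set.univ.pi fun i => Set.Ico ((u i : ℝ) / 2 ^ (n + 1)) ((u i + 1) / 2 ^ (n + 1))

section GridBox

variable {n : ℕ} {x : Fin 3 → ℝ}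

lemma gridIndex_mem_grid (hx : ∀ i, 0 ≤ x i ∧ x i < 1) : gridIndex n x ∈ grid n := by
  refine mem_grid.2 fun i => (Nat.floor_lt (by have := (hx i).1; positivity)).2 ?_
  push_cast
  nlinarith [hx i, pow_pos (two_pos (α := ℝ)) (n + 1)]

lemma mem_gridBox_gridIndex (hx : ∀ i, 0 ≤ x i) : x ∈ gridBox n (gridIndex n x) := by
  have hpos : (0 : ℝ) < 2 ^ (n + 1) := by positivity
  refine Set.mem_univ_pi.2 fun i => ⟨?_, ?_⟩
  · rw [div_le_iff₀ hpos]
    exact Nat.floor_le (by have := hx i; positivity)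
  · rw [lt_div_iff₀ hpos]
    exact Nat.lt_floor_add_one _

lemma volume_gridBox (n : ℕ) (u : Fin 3 → ℕ) :
    volume (gridBox n u) = ENNReal.ofReal (1 / #(grid n)) := by
  have hside : ∀ i, volume (Set.Ico ((u i : ℝ) / 2 ^ (n + 1)) ((u i + 1) / 2 ^ (n + 1)))
      = ENNReal.ofReal (1 / 2 ^ (n + 1)) := fun i => by
    rw [Real.volume_Ico, ← sub_div, add_sub_cancel_left]
  rw [gridBox, volume_pi_pi, prod_congr rfl fun i _ => hside i, prod_const, card_univ,
    Fintype.card_fin, ← ENNReal.ofReal_pow (by positivity), card_grid]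
  push_cast
  rw [div_pow, one_pow]

end GridBox

section RfunOnGrid

variable {ε : ((Fin 3 → ℕ) × (Fin 3 → ℕ)) → ℝ} {r : Fin 3 → ℕ} {x : Fin 3 → ℝ}

lemma rfun_of_apply_eq_one {i : Fin 3} (h : x i = 1) : rfun ε r x = 0 := by
  refine sum_eq_zero fun j hj => ?_
  have hji : j i < 2 ^ r i := mem_range.1 (Fintype.mem_piFinset.1 hj i)
  rw [haarR, prod_eq_zero (mem_univ i) (by rw [h]; exact haar1_one hji), mul_zero]

/-- Only the rectangle of level `r` containing the box of the grid point contributes. -/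
theorem rfun_eq_gridRfun {n : ℕ} (hr : r ∈ Hn n) (hx : ∀ i, 0 ≤ x i ∧ x i < 1) :
    rfun ε r x = gridRfun n ε r (gridIndex n x) := by
  set u := gridIndex n x
  have hpos : ∀ i, gridPos n r u i < 2 ^ r i := fun i => by
    have := le_of_mem_Hn hr i
    refine Nat.div_lt_of_lt_mul ?_
    rw [← pow_add, Nat.sub_add_cancel (by omega)]
    exact mem_grid.1 (gridIndex_mem_grid hx) i
  have hhaar : ∀ i j, haar1 (r i) j (x i) = if gridPos n r u i = j then gridSign n i (r i) u
      else 0 := fun i j => haar1_eq_ite_testBit (le_of_mem_Hn hr i) j (hx i).1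
  rw [rfun, sum_eq_single (gridPos n r u)]
  · simp only [haarR, hhaar, if_pos, Fin.prod_univ_three, gridRfun, gridRfunYZ]
    ring
  · intro j _ hne
    obtain ⟨i, hi⟩ : ∃ i, j i ≠ gridPos n r u i := by
      by_contra! h
      exact hne (funext h)
    rw [haarR, prod_eq_zero (mem_univ i) (by rw [hhaar, if_neg (Ne.symm hi)]), mul_zero]
  · exact fun h => absurd (Fintype.mem_piFinset.2 fun i => mem_range.2 (hpos i)) h

end RfunOnGrid

theorem volume_prod_neg_le (n : ℕ) (ε : ((Fin 3 → ℕ) × (Fin 3 → ℕ)) → ℝ) {ι : Type*}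
    (T : Finset ι) {A : ι → Finset (Fin 3 → ℕ)} (hA : ∀ t ∈ T, A t ⊆ Hn n) (ρ : ℝ) :
    volume {x ∈ unitCube 3 | ∏ t ∈ T, (1 + ρ * ∑ r ∈ A t, rfun ε r x) < 0}
      ≤ ENNReal.ofReal (#{u ∈ grid n | ∏ t ∈ T, (1 + ρ * ∑ r ∈ A t, gridRfun n ε r u) < 0}
          / #(grid n)) := by
  set Bad := {u ∈ grid n | ∏ t ∈ T, (1 + ρ * ∑ r ∈ A t, gridRfun n ε r u) < 0}
  have hcover : {x ∈ unitCube 3 | ∏ t ∈ T, (1 + ρ * ∑ r ∈ A t, rfun ε r x) < 0}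
      ⊆ ⋃ u ∈ Bad, gridBox n u := by
    rintro x ⟨hx, hneg⟩
    simp only [unitCube, Set.mem_univ_pi, Set.mem_Icc] at hx
    by_cases hone : ∃ i, x i = 1
    · obtain ⟨i, hi⟩ := hone
      norm_num [rfun_of_apply_eq_one hi] at hneg
    · simp only [not_exists] at hone
      have hx' : ∀ i, 0 ≤ x i ∧ x i < 1 := fun i => ⟨(hx i).1, (hx i).2.lt_of_ne (hone i)⟩
      refine Set.mem_biUnion (x := gridIndex n x) ?_ (mem_gridBox_gridIndex fun i => (hx i).1)
      refine mem_filter.2 ⟨gridIndex_mem_grid hx', ?_⟩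
      rwa [prod_congr rfl fun t ht =>
        by rw [sum_congr rfl fun r hr => rfun_eq_gridRfun (hA t ht hr) hx']] at hneg
  calc volume {x ∈ unitCube 3 | ∏ t ∈ T, (1 + ρ * ∑ r ∈ A t, rfun ε r x) < 0}
      ≤ volume (⋃ u ∈ Bad, gridBox n u) := measure_mono hcover
    _ ≤ ∑ u ∈ Bad, volume (gridBox n u) := measure_biUnion_finset_le _ _
    _ = ENNReal.ofReal (#Bad / #(grid n)) := by
        simp only [volume_gridBox, sum_const, nsmul_eq_mul]
        rw [← ENNReal.ofReal_natCast, ← ENNReal.ofReal_mul (Nat.cast_nonneg _), mul_one_div]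

section Parameters

lemma eventually_six_mul_le_exp_rpow {c d : ℝ} (hc : 0 < c) (hd : 0 < d) :
    ∀ᶠ x : ℝ in atTop, 6 * x ≤ exp (c * x ^ d) := by
  filter_upwards [(isLittleO_log_rpow_atTop hd).bound (half_pos hc),
    (tendsto_rpow_atTop hd).eventually_ge_atTop (2 * log 6 / c), eventually_gt_atTop 0]
    with x hlog hlarge hx
  rw [norm_eq_abs, norm_eq_abs, abs_of_nonneg (rpow_nonneg hx.le d)] at hlog
  rw [← log_le_iff_le_exp (by positivity), log_mul (by norm_num) hx.ne']
  rw [div_le_iff₀' hc] at hlarge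
  linarith [le_abs_self (log x)]

lemma eventually_two_mul_add_four_le_exp {a e : ℝ} (ha : 0 < a) (ha1 : a ≤ 1) (he : 0 < e) :
    ∀ᶠ n : ℕ in atTop,
      1 ≤ n ∧ 2 * (n : ℝ) + 4 ≤ exp (a⁻¹ * (⌈a * (n : ℝ) ^ e⌉₊ : ℝ) ^ ((1 : ℝ) / 3) / 32) := by
  filter_upwards [tendsto_natCast_atTop_atTop.eventually
      (eventually_six_mul_le_exp_rpow (by positivity : 0 < a ^ ((1 : ℝ) / 3) / 32)
        (by positivity : 0 < e / 3)), eventually_ge_atTop 1] with n hexp hn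
  refine ⟨hn, ?_⟩
  have hn' : (1 : ℝ) ≤ n := by exact_mod_cast hn
  have hK : a ^ ((1 : ℝ) / 3) * (n : ℝ) ^ (e / 3)
      ≤ a⁻¹ * (⌈a * (n : ℝ) ^ e⌉₊ : ℝ) ^ ((1 : ℝ) / 3) :=
    calc a ^ ((1 : ℝ) / 3) * (n : ℝ) ^ (e / 3) = (a * (n : ℝ) ^ e) ^ ((1 : ℝ) / 3) := by
          rw [mul_rpow ha.le (by positivity), ← rpow_mul (by positivity)]
          ring_nf
      _ ≤ (⌈a * (n : ℝ) ^ e⌉₊ : ℝ) ^ ((1 : ℝ) / 3) := by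
          gcongr
          exact Nat.le_ceil _
      _ ≤ a⁻¹ * (⌈a * (n : ℝ) ^ e⌉₊ : ℝ) ^ ((1 : ℝ) / 3) :=
          le_mul_of_one_le_left (by positivity) (one_le_inv_iff₀.2 ⟨ha, ha1⟩)
  calc 2 * (n : ℝ) + 4 ≤ 6 * n := by linarith
    _ ≤ exp (a ^ ((1 : ℝ) / 3) / 32 * (n : ℝ) ^ (e / 3)) := hexp
    _ ≤ _ := by gcongr; linarith

/-- With `ρ = a q^(1/6) / n`, `w² = (n+1) K` and `V = 2 (n+1) w² / q`, the Hoeffding exponent of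
the block sums beats `K / 16`, where `K = a⁻¹ q^(1/3)`. -/
lemma div_sixteen_le_hoeffding_exponent {n a q : ℝ} (hn : 1 ≤ n) (ha : 0 < a) (hq : 0 < q) :
    a⁻¹ * q ^ ((1 : ℝ) / 3) / 16 ≤ (a * q ^ ((1 : ℝ) / 6) / n)⁻¹ ^ 2 /
      (2 * (2 * (n + 1) / q * ((n + 1) * (a⁻¹ * q ^ ((1 : ℝ) / 3))))) := by
  set Y := q ^ ((1 : ℝ) / 6)
  have hY : 0 < Y := by positivity
  have hY6 : q = Y ^ 6 := by
    rw [← rpow_natCast, ← rpow_mul hq.le]; norm_num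
  have hY2 : q ^ ((1 : ℝ) / 3) = Y ^ 2 := by
    rw [← rpow_natCast, ← rpow_mul hq.le]; norm_num
  rw [hY2, hY6, div_le_div_iff₀ (by norm_num) (by positivity)]
  field_simp
  nlinarith [sq_nonneg (n - 1), pow_pos hY 8]

lemma two_mul_add_exp_le_exp {n K x y : ℝ} (hn : 0 ≤ n) (hK : 0 ≤ K) (hx : K / 2 ≤ x)
    (hy : K / 16 ≤ y) (hgrow : 2 * n + 4 ≤ exp (K / 32)) :
    2 * ((n + 1) * exp (-x) + exp (-y)) ≤ exp (-(K / 32)) :=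
  calc 2 * ((n + 1) * exp (-x) + exp (-y))
      ≤ 2 * ((n + 1) * exp (-(K / 16)) + exp (-(K / 16))) := by gcongr; linarith
    _ = (2 * n + 4) * exp (-(K / 16)) := by ring
    _ ≤ exp (K / 32) * exp (-(K / 16)) := by gcongr
    _ = exp (-(K / 32)) := by rw [← exp_add]; ring_nf

end Parameters

end RieszProduct

open RieszProduct Finset Real in
/-- **Lemma 6.1, estimate (6.5): the Riesz product is negative only on a small set.**
With `b = 1/6`, `q = ⌈a n^ε⌉`, `ρ̃ = a q^b / n`, and `Ψ = ∏_{t=1}^q (1 + ρ̃ F_t)`, the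
measure of `{Ψ < 0}` is at most `C q exp(−c a⁻¹ q^(1/2 − b))` (note `1/2 − b = 1/3`).
The partition `I_1 < ⋯ < I_q` of `{0, …, n}` is encoded by its boundaries
`m 0 = 0 < m 1 < ⋯ < m q = n + 1`, each block having at most `2(n+1)/q` elements. -/
theorem riesz_product_rarely_negative :
    ∃ ε₀ C c : ℝ, 0 < ε₀ ∧ ε₀ < 1 ∧ 0 < C ∧ 0 < c ∧
      ∀ e : ℝ, 0 < e → e ≤ ε₀ → ∀ a : ℝ, 0 < a → a < 1 →
        ∃ N₀ : ℕ, ∀ n : ℕ, N₀ ≤ n →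
          ∀ q : ℕ, q = ⌈a * (n : ℝ) ^ e⌉₊ →
            ∀ m : ℕ → ℕ, m 0 = 0 → m q = n + 1 → (∀ t < q, m t < m (t + 1)) →
              (∀ t < q, ((m (t + 1) - m t : ℕ) : ℝ) ≤ 2 * ((n : ℝ) + 1) / q) →
              ∀ ε : ((Fin 3 → ℕ) × (Fin 3 → ℕ)) → ℝ, (∀ R, ε R = 1 ∨ ε R = -1) →
                volume {x ∈ unitCube 3 |
                    (∏ t ∈ Finset.Icc 1 q,
                      (1 + (a * (q : ℝ) ^ ((1 : ℝ) / 6) / n) *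
                        ∑ r ∈ Apart n m t, rfun ε r x)) < 0} ≤
                  ENNReal.ofReal
                    (C * q * Real.exp (-c * a⁻¹ * (q : ℝ) ^ ((1 : ℝ) / 3))) := by
  refine ⟨1 / 2, 1, 1 / 32, by norm_num, by norm_num, by norm_num, by norm_num, ?_⟩
  intro e he _ a ha ha1
  obtain ⟨N₀, hN₀⟩ := Filter.eventually_atTop.1 (eventually_two_mul_add_four_le_exp ha ha1.le he)
  refine ⟨N₀, fun n hn q hq m _ _ _ hblock ε hε => ?_⟩
  obtain ⟨hn1, hgrow⟩ := hN₀ n hn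
  rw [← hq] at hgrow
  have hq0 : (0 : ℝ) < q := by
    rw [hq, Nat.cast_pos, Nat.ceil_pos]; positivity
  set K := a⁻¹ * (q : ℝ) ^ ((1 : ℝ) / 3)
  set w := √((n + 1) * K)
  have hw : w ^ 2 = (n + 1) * K := sq_sqrt (by positivity)
  refine (volume_prod_neg_le n ε (Icc 1 q) (fun t _ => filter_subset _ _) _).trans
    (ENNReal.ofReal_le_ofReal ?_)
  rw [div_le_iff₀ (by rw [card_grid]; positivity)]
  refine (card_prod_neg_le hε (Icc 1 q) (fun t _ => filter_subset _ _) (by positivity)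
    (w := w) (sqrt_nonneg _) (V := 2 * (n + 1) / q * w ^ 2) (by positivity) fun t ht =>
      mul_le_mul_of_nonneg_right (card_image_Apart_le hblock ht) (sq_nonneg w)).trans ?_
  have hexp := two_mul_add_exp_le_exp (n := n) (x := w ^ 2 / (2 * (n + 1)))
    (y := (a * (q : ℝ) ^ ((1 : ℝ) / 6) / n)⁻¹ ^ 2 / (2 * (2 * (n + 1) / q * w ^ 2)))
    (by positivity) (by positivity) (le_of_eq (by rw [hw]; field_simp))
    (by rw [hw]; exact div_sixteen_le_hoeffding_exponent (by exact_mod_cast hn1) ha hq0) hgrow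
  have hK : -(1 / 32) * a⁻¹ * (q : ℝ) ^ ((1 : ℝ) / 3) = -(K / 32) := by ring
  rw [Nat.card_Icc, Nat.add_sub_cancel, hK]
  linarith [mul_le_mul_of_nonneg_left hexp (by positivity : (0 : ℝ) ≤ q * #(grid n))]
end
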